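/- arXiv:2603.14955 — 11 statements merged into one kernel-verified Lean document; each statement's English description precedes it below -/
import Mathlib

section
/- Let ⟨X, ⊕_p⟩ be a convex algebra and ⪯ a partial order on X satisfying (MO), and let x, y ∈ X with x ⪯ y. Then the map Γ_{x,y} : [0,1] → X defined by Γ_{x,y}(t) = y ⊕_t x is nondecreasing, and either Γ_{x,y} is strictly increasing (in particular injective), or the restriction of Γ_{x,y} to (0,1) is constant. -/
open Set Filter Topology

/-- A convex algebra on a set `X`: `op p x y` denotes `x ⊕_p y`, for `p ∈ (0,1)`,
extended to `p ∈ [0,1]` by the projection axioms `x ⊕_1 y = x` and `x ⊕_0 y = y`. -/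
structure ConvexAlg (X : Type*) where
  op : ℝ → X → X → X
  idem : ∀ p ∈ Set.Ioo (0:ℝ) 1, ∀ x : X, op p x x = x
  comm : ∀ p ∈ Set.Ioo (0:ℝ) 1, ∀ x y : X, op p x y = op (1 - p) y x
  assoc : ∀ p ∈ Set.Ioo (0:ℝ) 1, ∀ q ∈ Set.Ioo (0:ℝ) 1, ∀ x y z : X,
      op q (op p x y) z = op (p * q) x (op ((1 - p) * q / (1 - p * q)) y z)
  proj1 : ∀ x y : X, op 1 x y = x
  proj0 : ∀ x y : X, op 0 x y = y

/-- `y ⊳ x` : `y` eats `x`, i.e. `y ⊕_t x = y` for all `t ∈ (0,1]`. -/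
def ConvexAlg.Eats {X : Type*} (A : ConvexAlg X) (y x : X) : Prop :=
  ∀ t ∈ Set.Ioc (0:ℝ) 1, A.op t y x = y

/-!
Writing `Γ t = y ⊕_t x`, associativity and idempotence give `Γ (p * q) = Γ p ⊕_q x`, and (MO)
makes `z ⊕_q x` lie between `x` and `z` whenever `x ⪯ z`; hence `Γ` is monotone. If `Γ s = Γ t`
for some `s < t`, rescaling gives `Γ (t * r ^ n) = Γ t` with `r = s / t`, so by monotonicity `Γ`
is constant on `(0, t]`. Swapping `x` and `y` and reversing the order turns this into constancy
on `[s, 1)`, so `Γ` is constant on `(0, 1)`. Otherwise `Γ` is injective, hence strictly monotone.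
-/

lemma mem_Ioo_of_mem_Icc_of_ne {α : Type*} [PartialOrder α] {a b p : α} (hp : p ∈ Icc a b)
    (ha : p ≠ a) (hb : p ≠ b) : p ∈ Ioo a b :=
  ⟨hp.1.lt_of_ne' ha, hp.2.lt_of_ne hb⟩

namespace ConvexAlg

variable {X : Type*} (A : ConvexAlg X)

lemma op_self {p : ℝ} (hp : p ∈ Icc (0:ℝ) 1) (a : X) : A.op p a a = a := by
  rcases eq_or_ne p 0 with rfl | h0
  · exact A.proj0 a a
  rcases eq_or_ne p 1 with rfl | h1
  · exact A.proj1 a a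
  exact A.idem p (mem_Ioo_of_mem_Icc_of_ne hp h0 h1) a

lemma op_one_sub {p : ℝ} (hp : p ∈ Icc (0:ℝ) 1) (a b : X) : A.op (1 - p) a b = A.op p b a := by
  rcases eq_or_ne p 0 with rfl | h0
  · rw [sub_zero, A.proj1, A.proj0]
  rcases eq_or_ne p 1 with rfl | h1
  · rw [sub_self, A.proj0, A.proj1]
  exact (A.comm p (mem_Ioo_of_mem_Icc_of_ne hp h0 h1) b a).symm

lemma op_op_right_self {p q : ℝ} (hp : p ∈ Icc (0:ℝ) 1) (hq : q ∈ Icc (0:ℝ) 1) (b a : X) :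
    A.op q (A.op p b a) a = A.op (p * q) b a := by
  rcases eq_or_ne q 0 with rfl | hq0
  · rw [mul_zero, A.proj0, A.proj0]
  rcases eq_or_ne q 1 with rfl | hq1
  · rw [mul_one, A.proj1]
  rcases eq_or_ne p 0 with rfl | hp0
  · rw [zero_mul, A.proj0, A.op_self hq]
  rcases eq_or_ne p 1 with rfl | hp1
  · rw [one_mul, A.proj1]
  have hp' := mem_Ioo_of_mem_Icc_of_ne hp hp0 hp1
  have hq' := mem_Ioo_of_mem_Icc_of_ne hq hq0 hq1
  have hpq : p * q < 1 := by nlinarith [hp'.1, hp'.2, hq'.1, hq'.2]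
  have hratio : (1 - p) * q / (1 - p * q) ∈ Icc (0:ℝ) 1 := by
    rw [mem_Icc, div_le_one (by linarith)]
    exact ⟨div_nonneg (by nlinarith [hp'.2, hq'.1]) (by linarith), by nlinarith [hp'.1, hq'.2]⟩
  rw [A.assoc p hp' q hq' b a a, A.op_self hratio]

lemma op_mul_pow_eq {t r : ℝ} (ht : t ∈ Icc (0:ℝ) 1) (hr : r ∈ Icc (0:ℝ) 1) {b a : X}
    (h : A.op (t * r) b a = A.op t b a) (n : ℕ) : A.op (t * r ^ n) b a = A.op t b a := by
  induction n with
  | zero => rw [pow_zero, mul_one]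
  | succ n ih =>
    have hrn : r ^ n ∈ Icc (0:ℝ) 1 := ⟨pow_nonneg hr.1 n, pow_le_one₀ hr.1 hr.2⟩
    have htr : t * r ∈ Icc (0:ℝ) 1 := ⟨mul_nonneg ht.1 hr.1, mul_le_one₀ ht.2 hr.1 hr.2⟩
    rw [pow_succ', ← mul_assoc, ← A.op_op_right_self htr hrn, h, A.op_op_right_self ht hrn, ih]

section Order

variable [PartialOrder X]

/-- The condition (MO). -/
def IsMonotone : Prop :=
  ∀ x x' y : X, ∀ p ∈ Ioo (0:ℝ) 1, x ≤ x' → A.op p x y ≤ A.op p x' y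

variable {A}

lemma IsMonotone.dual (hA : A.IsMonotone) : IsMonotone (X := Xᵒᵈ) A :=
  fun x x' y p hp hx => hA x' x y p hp hx

lemma IsMonotone.op_le_op (hA : A.IsMonotone) {p : ℝ} (hp : p ∈ Icc (0:ℝ) 1) {x x' : X}
    (hx : x ≤ x') (y : X) : A.op p x y ≤ A.op p x' y := by
  rcases eq_or_ne p 0 with rfl | h0
  · rw [A.proj0, A.proj0]
  rcases eq_or_ne p 1 with rfl | h1
  · rwa [A.proj1, A.proj1]
  exact hA x x' y p (mem_Ioo_of_mem_Icc_of_ne hp h0 h1) hx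

lemma IsMonotone.le_op (hA : A.IsMonotone) {p : ℝ} (hp : p ∈ Icc (0:ℝ) 1) {x z : X}
    (hxz : x ≤ z) : x ≤ A.op p z x := by
  simpa only [A.op_self hp] using hA.op_le_op hp hxz x

lemma IsMonotone.op_le (hA : A.IsMonotone) {p : ℝ} (hp : p ∈ Icc (0:ℝ) 1) {x z : X}
    (hxz : x ≤ z) : A.op p z x ≤ z := by
  have hp' : 1 - p ∈ Icc (0:ℝ) 1 := ⟨by linarith [hp.2], by linarith [hp.1]⟩
  calc A.op p z x = A.op (1 - p) x z := (A.op_one_sub hp x z).symm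
    _ ≤ A.op (1 - p) z z := hA.op_le_op hp' hxz z
    _ = z := A.op_self hp' z

variable {x y : X}

lemma IsMonotone.monotoneOn_op (hA : A.IsMonotone) (hxy : x ≤ y) :
    MonotoneOn (fun t => A.op t y x) (Icc (0:ℝ) 1) := by
  intro a ha b hb hab
  rcases hb.1.eq_or_lt with rfl | hb0
  · rw [le_antisymm hab ha.1]
  have hab' : a / b ∈ Icc (0:ℝ) 1 := ⟨div_nonneg ha.1 hb0.le, (div_le_one hb0).2 hab⟩
  have hΓ : A.op a y x = A.op (a / b) (A.op b y x) x := by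
    rw [A.op_op_right_self hb hab', mul_div_cancel₀ a hb0.ne']
  simpa only [hΓ] using hA.op_le hab' (hA.le_op hb hxy)

lemma IsMonotone.op_eq_of_op_eq_of_le (hA : A.IsMonotone) (hxy : x ≤ y) {s t u : ℝ}
    (hs : 0 ≤ s) (hst : s < t) (ht : t ≤ 1) (heq : A.op s y x = A.op t y x)
    (hu : u ∈ Ioc 0 t) : A.op u y x = A.op t y x := by
  have ht0 : 0 < t := hs.trans_lt hst
  have htI : t ∈ Icc (0:ℝ) 1 := ⟨ht0.le, ht⟩
  have huI : u ∈ Icc (0:ℝ) 1 := ⟨hu.1.le, hu.2.trans ht⟩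
  have hr : s / t ∈ Icc (0:ℝ) 1 := ⟨div_nonneg hs ht0.le, (div_le_one ht0).2 hst.le⟩
  obtain ⟨n, hn⟩ := exists_pow_lt_of_lt_one (div_pos hu.1 ht0) ((div_lt_one ht0).2 hst)
  have hgeom : A.op (t * (s / t) ^ n) y x = A.op t y x :=
    A.op_mul_pow_eq htI hr (by rwa [mul_div_cancel₀ s ht0.ne']) n
  have hsmall : t * (s / t) ^ n ≤ u := by
    have := mul_lt_mul_of_pos_left hn ht0
    rw [mul_div_cancel₀ u ht0.ne'] at this
    exact this.le
  have hmono := hA.monotoneOn_op hxy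
  refine le_antisymm (hmono huI htI hu.2) ?_
  calc A.op t y x = A.op (t * (s / t) ^ n) y x := hgeom.symm
    _ ≤ A.op u y x :=
      hmono ⟨mul_nonneg ht0.le (pow_nonneg hr.1 n), hsmall.trans huI.2⟩ huI hsmall

lemma IsMonotone.op_eq_of_op_eq_of_ge (hA : A.IsMonotone) (hxy : x ≤ y) {s t u : ℝ}
    (hs : 0 ≤ s) (hst : s < t) (ht : t ≤ 1) (heq : A.op s y x = A.op t y x)
    (hu : u ∈ Ico s 1) : A.op u y x = A.op s y x := by
  have hflip : ∀ v ∈ Icc (0:ℝ) 1, A.op (1 - v) x y = A.op v y x :=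
    fun v hv => A.op_one_sub hv x y
  have heq' : A.op (1 - t) x y = A.op (1 - s) x y := by
    rw [hflip t ⟨by linarith, ht⟩, hflip s ⟨hs, by linarith⟩, heq]
  -- in the reversed order `y ⪯ x`, and `v ↦ x ⊕_v y` is `v ↦ Γ (1 - v)`
  have hdual : A.op (1 - u) x y = A.op (1 - s) x y :=
    hA.dual.op_eq_of_op_eq_of_le (x := OrderDual.toDual y) (y := OrderDual.toDual x) hxy
      (by linarith) (by linarith) (by linarith) heq' ⟨by linarith [hu.2], by linarith [hu.1]⟩
  rwa [hflip u ⟨by linarith [hu.1], hu.2.le⟩, hflip s ⟨hs, by linarith⟩] at hdual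

lemma IsMonotone.op_eq_of_op_eq (hA : A.IsMonotone) (hxy : x ≤ y) {a b : ℝ}
    (ha : a ∈ Icc (0:ℝ) 1) (hb : b ∈ Icc (0:ℝ) 1) (hab : a < b)
    (heq : A.op a y x = A.op b y x) {u : ℝ} (hu : u ∈ Ioo (0:ℝ) 1) :
    A.op u y x = A.op a y x := by
  rcases le_or_gt u b with hub | hbu
  · rw [heq]
    exact hA.op_eq_of_op_eq_of_le hxy ha.1 hab hb.2 heq ⟨hu.1, hub⟩
  · exact hA.op_eq_of_op_eq_of_ge hxy ha.1 hab hb.2 heq ⟨(hab.trans hbu).le, hu.2⟩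

end Order

end ConvexAlg

/-- Corollary 2.10: if `⟨X, ⊕_p⟩` is a convex algebra with a partial order satisfying (MO)
and `x ⪯ y`, then the map `Γ_{x,y} : t ↦ y ⊕_t x` is nondecreasing on `[0,1]`, and either
it is strictly increasing on `[0,1]` (in particular injective), or its restriction to
`(0,1)` is constant. -/
theorem stmt_1 {X : Type*} [PartialOrder X] (A : ConvexAlg X)
    (hMO : ∀ x x' y : X, ∀ p ∈ Set.Ioo (0:ℝ) 1, x ≤ x' → A.op p x y ≤ A.op p x' y)
    (x y : X) (hxy : x ≤ y) :
    MonotoneOn (fun t => A.op t y x) (Set.Icc (0:ℝ) 1) ∧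
    (StrictMonoOn (fun t => A.op t y x) (Set.Icc (0:ℝ) 1) ∨
      ∀ s ∈ Set.Ioo (0:ℝ) 1, ∀ t ∈ Set.Ioo (0:ℝ) 1, A.op s y x = A.op t y x) := by
  have hA : A.IsMonotone := hMO
  have hmono := hA.monotoneOn_op hxy
  refine ⟨hmono, ?_⟩
  by_cases hinj : InjOn (fun t => A.op t y x) (Icc (0:ℝ) 1)
  · exact Or.inl (hmono.strictMonoOn_of_injOn hinj)
  right
  simp only [InjOn, not_forall, exists_prop] at hinj
  obtain ⟨a, ha, b, hb, heq, hne⟩ := hinj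
  intro s hs t ht
  rcases lt_or_gt_of_ne hne with hab | hba
  · rw [hA.op_eq_of_op_eq hxy ha hb hab heq hs, hA.op_eq_of_op_eq hxy ha hb hab heq ht]
  · rw [hA.op_eq_of_op_eq hxy hb ha hba heq.symm hs, hA.op_eq_of_op_eq hxy hb ha hba heq.symm ht]
end

section
/- Let ⟨[0,1], ⊕_p⟩ be a convex algebra satisfying (MO) and (UC). Then for all x, y ∈ [0,1) and all p ∈ [0,1], the two-sided right limit holds: x' ⊕_p y' tends to x ⊕_p y as x' → x from above and y' → y from above (i.e. for all sequences x_n ↓ x with x_n > x and y_n ↓ y with y_n > y, one has x_n ⊕_p y_n → x ⊕_p y). -/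
open Set Filter Topology

/-- A convex algebra on the interval `[0,1] ⊆ ℝ`: `op p x y` denotes `x ⊕_p y`,
for `p ∈ (0,1)`, extended to `p ∈ [0,1]` by the projection axioms
`x ⊕_1 y = x` and `x ⊕_0 y = y`.  All axioms are required only on `[0,1]`;
values of `op` outside `[0,1]` are irrelevant. -/
structure UCA where
  op : ℝ → ℝ → ℝ → ℝ
  mem : ∀ p ∈ Set.Icc (0:ℝ) 1, ∀ x ∈ Set.Icc (0:ℝ) 1, ∀ y ∈ Set.Icc (0:ℝ) 1,
      op p x y ∈ Set.Icc (0:ℝ) 1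
  idem : ∀ p ∈ Set.Ioo (0:ℝ) 1, ∀ x ∈ Set.Icc (0:ℝ) 1, op p x x = x
  comm : ∀ p ∈ Set.Ioo (0:ℝ) 1, ∀ x ∈ Set.Icc (0:ℝ) 1, ∀ y ∈ Set.Icc (0:ℝ) 1,
      op p x y = op (1 - p) y x
  assoc : ∀ p ∈ Set.Ioo (0:ℝ) 1, ∀ q ∈ Set.Ioo (0:ℝ) 1,
      ∀ x ∈ Set.Icc (0:ℝ) 1, ∀ y ∈ Set.Icc (0:ℝ) 1, ∀ z ∈ Set.Icc (0:ℝ) 1,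
      op q (op p x y) z = op (p * q) x (op ((1 - p) * q / (1 - p * q)) y z)
  proj1 : ∀ x ∈ Set.Icc (0:ℝ) 1, ∀ y ∈ Set.Icc (0:ℝ) 1, op 1 x y = x
  proj0 : ∀ x ∈ Set.Icc (0:ℝ) 1, ∀ y ∈ Set.Icc (0:ℝ) 1, op 0 x y = y

/-- Monotonicity (MO): `x ≤ x'` implies `x ⊕_p y ≤ x' ⊕_p y`. -/
def UCA.MO (A : UCA) : Prop :=
  ∀ x ∈ Set.Icc (0:ℝ) 1, ∀ x' ∈ Set.Icc (0:ℝ) 1, ∀ y ∈ Set.Icc (0:ℝ) 1,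
    ∀ p ∈ Set.Ioo (0:ℝ) 1, x ≤ x' → A.op p x y ≤ A.op p x' y

/-- (UC): for `x, y ∈ [0,1)` and `p ∈ (0,1)`,
`limsup_{ε→0⁺} ((x+ε) ⊕_p (y+ε)) ≤ x ⊕_p y`. -/
def UCA.UC (A : UCA) : Prop :=
  ∀ x ∈ Set.Ico (0:ℝ) 1, ∀ y ∈ Set.Ico (0:ℝ) 1, ∀ p ∈ Set.Ioo (0:ℝ) 1,
    Filter.limsup (fun ε => A.op p (x + ε) (y + ε)) (𝓝[>] (0:ℝ)) ≤ A.op p x y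

/-- (LC): for `x ≤ y` in `[0,1]`, `liminf_{p→1⁻} (y ⊕_p x) ≥ y`. -/
def UCA.LC (A : UCA) : Prop :=
  ∀ x ∈ Set.Icc (0:ℝ) 1, ∀ y ∈ Set.Icc (0:ℝ) 1, x ≤ y →
    y ≤ Filter.liminf (fun p => A.op p y x) (𝓝[<] (1:ℝ))

/-- `y ⊳ x` : `y` eats `x`, i.e. `y ⊕_t x = y` for all `t ∈ (0,1]`. -/
def UCA.Eats (A : UCA) (y x : ℝ) : Prop :=
  ∀ t ∈ Set.Ioc (0:ℝ) 1, A.op t y x = y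

/-- `E^⊕ = { y ∈ [0,1] : y ⊳ 0 }`. -/
def UCA.E (A : UCA) : Set ℝ := {y ∈ Set.Icc (0:ℝ) 1 | A.Eats y 0}

/-- `V_{x,y} = inf { y ⊕_p x : p ∈ (0,1] }`. -/
noncomputable def UCA.V (A : UCA) (x y : ℝ) : ℝ :=
  sInf ((fun p => A.op p y x) '' Set.Ioc (0:ℝ) 1)

lemma UCA.mono_both (A : UCA) (hMO : A.MO) {p a a' b b' : ℝ}
    (hp : p ∈ Set.Ioo (0:ℝ) 1) (ha : a ∈ Set.Icc (0:ℝ) 1) (ha' : a' ∈ Set.Icc (0:ℝ) 1)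
    (hb : b ∈ Set.Icc (0:ℝ) 1) (hb' : b' ∈ Set.Icc (0:ℝ) 1)
    (h1 : a ≤ a') (h2 : b ≤ b') : A.op p a b ≤ A.op p a' b' := by
  have hp' : 1 - p ∈ Set.Ioo (0:ℝ) 1 := ⟨by linarith [hp.2], by linarith [hp.1]⟩
  calc A.op p a b ≤ A.op p a' b := hMO a ha a' ha' b hb p hp h1
    _ = A.op (1-p) b a' := A.comm p hp a' ha' b hb
    _ ≤ A.op (1-p) b' a' := hMO b hb b' hb' a' ha' (1-p) hp' h2
    _ = A.op p a' b' := (A.comm p hp a' ha' b' hb').symm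

/-- Lemma 2.14(i), first relation: for a convex algebra on `[0,1]` satisfying (MO) and (UC),
for all `x, y ∈ [0,1)` and `p ∈ [0,1]`, `x' ⊕_p y' → x ⊕_p y` as `x' → x⁺`, `y' → y⁺`;
i.e. for all sequences `x_n → x` with `x_n > x` and `y_n → y` with `y_n > y`,
`x_n ⊕_p y_n → x ⊕_p y`. -/
theorem stmt_2 (A : UCA) (hMO : A.MO) (hUC : A.UC) :
    ∀ x ∈ Set.Ico (0:ℝ) 1, ∀ y ∈ Set.Ico (0:ℝ) 1, ∀ p ∈ Set.Icc (0:ℝ) 1,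
      ∀ xs ys : ℕ → ℝ,
        (∀ n, x < xs n) → Filter.Tendsto xs Filter.atTop (𝓝 x) →
        (∀ n, y < ys n) → Filter.Tendsto ys Filter.atTop (𝓝 y) →
        Filter.Tendsto (fun n => A.op p (xs n) (ys n)) Filter.atTop (𝓝 (A.op p x y)) := by
  intro x hx y hy p hp xs ys hxs hxsl hys hysl
  have hxI : x ∈ Set.Icc (0:ℝ) 1 := ⟨hx.1, hx.2.le⟩
  have hyI : y ∈ Set.Icc (0:ℝ) 1 := ⟨hy.1, hy.2.le⟩
  have hxsm : ∀ᶠ n in atTop, xs n ∈ Set.Icc (0:ℝ) 1 := by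
    filter_upwards [hxsl.eventually_lt_const hx.2] with n h
    exact ⟨le_trans hx.1 (hxs n).le, h.le⟩
  have hysm : ∀ᶠ n in atTop, ys n ∈ Set.Icc (0:ℝ) 1 := by
    filter_upwards [hysl.eventually_lt_const hy.2] with n h
    exact ⟨le_trans hy.1 (hys n).le, h.le⟩
  rcases eq_or_lt_of_le hp.1 with h0 | h0
  · -- p = 0
    rw [← h0, A.proj0 x hxI y hyI]
    refine hysl.congr' ?_
    filter_upwards [hxsm, hysm] with n h1 h2
    rw [← h0] at *
    exact (A.proj0 _ h1 _ h2).symm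
  rcases eq_or_lt_of_le hp.2 with h1 | h1
  · -- p = 1
    rw [h1, A.proj1 x hxI y hyI]
    refine hxsl.congr' ?_
    filter_upwards [hxsm, hysm] with n hm1 hm2
    rw [h1] at *
    exact (A.proj1 _ hm1 _ hm2).symm
  have hpIoo : p ∈ Set.Ioo (0:ℝ) 1 := ⟨h0, h1⟩
  set L := A.op p x y with hL
  set en : ℕ → ℝ := fun n => max (xs n - x) (ys n - y) with hen
  have hepos : ∀ n, 0 < en n := fun n =>
    lt_max_of_lt_left (by linarith [hxs n])
  have hetend : Tendsto en atTop (𝓝 0) := by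
    have h1 : Tendsto (fun n => xs n - x) atTop (𝓝 0) := by
      simpa using hxsl.sub (tendsto_const_nhds (x := x))
    have h2 : Tendsto (fun n => ys n - y) atTop (𝓝 0) := by
      simpa using hysl.sub (tendsto_const_nhds (x := y))
    simpa using h1.max h2
  have heIoi : Tendsto en atTop (𝓝[>] 0) :=
    tendsto_nhdsWithin_iff.mpr ⟨hetend, Filter.Eventually.of_forall hepos⟩
  -- small ε membership
  have hsmall : ∀ᶠ ε in 𝓝[>] (0:ℝ),
      x + ε ∈ Set.Icc (0:ℝ) 1 ∧ y + ε ∈ Set.Icc (0:ℝ) 1 := by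
    have hmem : Set.Ioo (0:ℝ) (min (1-x) (1-y)) ∈ 𝓝[>] (0:ℝ) :=
      Ioo_mem_nhdsGT_of_mem ⟨le_refl _, lt_min (by linarith [hx.2]) (by linarith [hy.2])⟩
    filter_upwards [hmem] with ε hε
    have := hε.2
    constructor
    · constructor <;> [linarith [hx.1, hε.1]; linarith [lt_of_lt_of_le this (min_le_left _ _)]]
    · constructor <;> [linarith [hy.1, hε.1]; linarith [lt_of_lt_of_le this (min_le_right _ _)]]
  have hbdd : Filter.IsBoundedUnder (· ≤ ·) (𝓝[>] (0:ℝ))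
      (fun ε => A.op p (x + ε) (y + ε)) := by
    refine Filter.isBoundedUnder_of_eventually_le (a := 1) ?_
    filter_upwards [hsmall] with ε hε
    exact (A.mem p (Set.Ioo_subset_Icc_self hpIoo) _ hε.1 _ hε.2).2
  -- eventual comparison fn ≤ g(en n)
  have hcomp : ∀ᶠ n in atTop, A.op p (xs n) (ys n) ≤ A.op p (x + en n) (y + en n) := by
    filter_upwards [hxsm, hysm, heIoi.eventually hsmall] with n hm1 hm2 hm3
    exact A.mono_both hMO hpIoo hm1 hm3.1 hm2 hm3.2
      (by have := le_max_left (xs n - x) (ys n - y); simp only [hen]; linarith)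
      (by have := le_max_right (xs n - x) (ys n - y); simp only [hen]; linarith)
  rw [tendsto_order]
  constructor
  · intro a ha
    filter_upwards [hxsm, hysm] with n hm1 hm2
    exact lt_of_lt_of_le ha
      (A.mono_both hMO hpIoo hxI hm1 hyI hm2 (hxs n).le (hys n).le)
  · intro a ha
    have hls : Filter.limsup (fun ε => A.op p (x + ε) (y + ε)) (𝓝[>] (0:ℝ)) < a :=
      lt_of_le_of_lt (hUC x hx y hy p hpIoo) ha
    have hev : ∀ᶠ ε in 𝓝[>] (0:ℝ), A.op p (x + ε) (y + ε) < a :=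
      Filter.eventually_lt_of_limsup_lt hls hbdd
    filter_upwards [hcomp, heIoi.eventually hev] with n h1 h2
    exact lt_of_le_of_lt h1 h2
end

section
/- Let ⟨[0,1], ⊕_p⟩ be a convex algebra satisfying (MO) and (UC). Then for all x, y ∈ [0,1] with x ≤ y and all q ∈ (0,1), the right limit in the parameter holds: y ⊕_p x tends to y ⊕_q x as p → q from above. -/
open Set Filter Topology

/-! Write `f(p) = y ⊕_p x`. Parametric associativity gives `f(p') = y ⊕_s f(p)` for `p < p'` and
`f(pt) = f(p) ⊕_t x`; with (MO) the first identity makes `f` monotone, and with (UC) the second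
shows that right-continuity of `f` at a point `p` with `f(p) < 1` propagates to every `pt < p`.
A monotone function is right-continuous at all but countably many points, so if `f(b) < 1` for
some `b > q` there is a right-continuity point `p ∈ (q, b)`, which propagates down to `q`.
Otherwise `f = 1` on `(q, 1)`, and `f(q) = 1 ⊕_u x ≥ f(u) = 1` for a suitable `u`. -/

theorem MonotoneOn.exists_continuousWithinAt_Ioi {β : Type*} [LinearOrder β]
    [TopologicalSpace β] [OrderTopology β] [SecondCountableTopology β] {f : ℝ → β} {a b : ℝ}
    (hab : a < b) (hf : MonotoneOn f (Ioo a b)) :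
    ∃ p ∈ Ioo a b, ContinuousWithinAt f (Ioi p) p := by
  by_contra! h
  have hbad : Ioo a b ⊆ {p ∈ Ioo a b | ¬ContinuousWithinAt f (Ioo a b ∩ Ioi p) p} :=
    fun p hp => ⟨hp, fun hcont => h p hp
      (hcont.mono_of_mem_nhdsWithin
        (inter_mem (mem_nhdsWithin_of_mem_nhds (Ioo_mem_nhds hp.1 hp.2)) self_mem_nhdsWithin))⟩
  exact hab.not_ge (Cardinal.Real.Ioo_countable_iff.mp
    (hf.countable_not_continuousWithinAt_Ioi.mono hbad))

namespace UCA

variable {A : UCA} {x y : ℝ}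

lemma one_sub_mem_Ioo {p : ℝ} (hp : p ∈ Ioo (0:ℝ) 1) : 1 - p ∈ Ioo (0:ℝ) 1 :=
  ⟨by linarith [hp.2], by linarith [hp.1]⟩

lemma op_mem_Icc (hx : x ∈ Icc (0:ℝ) 1) (hy : y ∈ Icc (0:ℝ) 1) {p : ℝ}
    (hp : p ∈ Ioo (0:ℝ) 1) : A.op p y x ∈ Icc (0:ℝ) 1 :=
  A.mem p (Ioo_subset_Icc_self hp) y hy x hx

lemma op_le_op_right (hMO : A.MO) {p a b c : ℝ} (hp : p ∈ Ioo (0:ℝ) 1)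
    (ha : a ∈ Icc (0:ℝ) 1) (hb : b ∈ Icc (0:ℝ) 1) (hc : c ∈ Icc (0:ℝ) 1) (hbc : b ≤ c) :
    A.op p a b ≤ A.op p a c := by
  rw [A.comm p hp a ha b hb, A.comm p hp a ha c hc]
  exact hMO b hb c hc a ha (1 - p) (one_sub_mem_Ioo hp) hbc

lemma op_le_left (hMO : A.MO) (hx : x ∈ Icc (0:ℝ) 1) (hy : y ∈ Icc (0:ℝ) 1) (hxy : x ≤ y)
    {p : ℝ} (hp : p ∈ Ioo (0:ℝ) 1) : A.op p y x ≤ y := by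
  simpa only [A.idem p hp y hy] using op_le_op_right hMO hp hy hx hy hxy

lemma right_le_op (hMO : A.MO) (hx : x ∈ Icc (0:ℝ) 1) (hy : y ∈ Icc (0:ℝ) 1) (hxy : x ≤ y)
    {p : ℝ} (hp : p ∈ Ioo (0:ℝ) 1) : x ≤ A.op p y x := by
  simpa only [A.idem p hp x hx] using hMO x hx y hy x hx p hp hxy

lemma op_op_right (hx : x ∈ Icc (0:ℝ) 1) (hy : y ∈ Icc (0:ℝ) 1) {a u : ℝ}
    (ha : a ∈ Ioo (0:ℝ) 1) (hu : u ∈ Ioo (0:ℝ) 1) :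
    A.op u (A.op a y x) x = A.op (a * u) y x := by
  have hau : a * u < 1 := by nlinarith [ha.1, ha.2, hu.1, hu.2]
  have hr : (1 - a) * u / (1 - a * u) ∈ Ioo (0:ℝ) 1 := by
    refine ⟨div_pos (by nlinarith [ha.2, hu.1]) (by linarith), ?_⟩
    rw [div_lt_one (by linarith)]
    nlinarith [ha.1, hu.2]
  simpa only [A.idem _ hr x hx] using A.assoc a ha u hu y hy x hx x hx

lemma op_eq_op_op_left (hx : x ∈ Icc (0:ℝ) 1) (hy : y ∈ Icc (0:ℝ) 1) {p p' : ℝ}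
    (hp : p ∈ Ioo (0:ℝ) 1) (hp' : p' ∈ Ioo (0:ℝ) 1) (hpp' : p < p') :
    A.op p' y x = A.op ((p' - p) / (1 - p)) y (A.op p y x) := by
  have h1p : (0:ℝ) < 1 - p := by linarith [hp.2]
  have hp'0 : p' ≠ 0 := hp'.1.ne'
  have hP : (p' - p) / (p' * (1 - p)) ∈ Ioo (0:ℝ) 1 := by
    refine ⟨div_pos (by linarith) (mul_pos hp'.1 h1p), ?_⟩
    rw [div_lt_one (mul_pos hp'.1 h1p)]
    nlinarith [hp.1, hp'.2]
  have hprod : (p' - p) / (p' * (1 - p)) * p' = (p' - p) / (1 - p) := by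
    field_simp
  have hrest : (1 - (p' - p) / (p' * (1 - p))) * p' / (1 - (p' - p) / (1 - p)) = p := by
    have h1p' : (0:ℝ) < 1 - p' := by linarith [hp'.2]
    rw [show 1 - (p' - p) / (1 - p) = (1 - p') / (1 - p) by field_simp; ring]
    field_simp
    ring
  have h := A.assoc _ hP p' hp' y hy y hy x hx
  rwa [A.idem _ hP y hy, hprod, hrest] at h

lemma monotoneOn_op (hMO : A.MO) (hx : x ∈ Icc (0:ℝ) 1) (hy : y ∈ Icc (0:ℝ) 1) (hxy : x ≤ y) :
    MonotoneOn (fun p => A.op p y x) (Ioo 0 1) := by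
  intro p hp p' hp' hpp'
  rcases hpp'.eq_or_lt with rfl | hlt
  · rfl
  have hs : (p' - p) / (1 - p) ∈ Ioo (0:ℝ) 1 := by
    refine ⟨div_pos (by linarith) (by linarith [hp.2]), ?_⟩
    rw [div_lt_one (by linarith [hp.2])]
    linarith [hp'.2]
  have hfp := op_mem_Icc (A := A) hx hy hp
  calc A.op p y x = A.op ((p' - p) / (1 - p)) (A.op p y x) (A.op p y x) := (A.idem _ hs _ hfp).symm
    _ ≤ A.op ((p' - p) / (1 - p)) y (A.op p y x) :=
      hMO _ hfp y hy _ hfp _ hs (op_le_left hMO hx hy hxy hp)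
    _ = A.op p' y x := (op_eq_op_op_left hx hy hp hp' hlt).symm

lemma continuousWithinAt_op_mul (hMO : A.MO) (hUC : A.UC) (hx : x ∈ Icc (0:ℝ) 1)
    (hy : y ∈ Icc (0:ℝ) 1) (hxy : x ≤ y) {p t : ℝ} (hp : p ∈ Ioo (0:ℝ) 1)
    (ht : t ∈ Ioo (0:ℝ) 1) (hp1 : A.op p y x < 1)
    (hcont : ContinuousWithinAt (fun s => A.op s y x) (Ioi p) p) :
    ContinuousWithinAt (fun s => A.op s y x) (Ioi (p * t)) (p * t) := by
  have hpt : p * t ∈ Ioo (0:ℝ) 1 := ⟨mul_pos hp.1 ht.1, by nlinarith [hp.2, ht.1, ht.2]⟩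
  have hmono := monotoneOn_op hMO hx hy hxy
  have hfp := op_mem_Icc (A := A) hx hy hp
  have hx1 : x < 1 := (right_le_op hMO hx hy hxy hp).trans_lt hp1
  rw [ContinuousWithinAt, tendsto_order]
  refine ⟨fun a ha => ?_, fun a ha => ?_⟩
  · filter_upwards [Ioo_mem_nhdsGT hpt.2] with s hs
    exact ha.trans_le (hmono hpt ⟨hpt.1.trans hs.1, hs.2⟩ hs.1.le)
  -- (UC) at `(f p, x)`: perturbing both arguments by a small `ε` keeps `f p ⊕_t x` below `a`.
  set g := fun ε => A.op t (A.op p y x + ε) (x + ε)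
  have hδ : (0:ℝ) < min (1 - A.op p y x) (1 - x) := lt_min (by linarith) (by linarith)
  have hsmall : ∀ᶠ ε in 𝓝[>] (0:ℝ), ε ∈ Ioo 0 (min (1 - A.op p y x) (1 - x)) :=
    Ioo_mem_nhdsGT hδ
  have hmemε : ∀ ε ∈ Ioo 0 (min (1 - A.op p y x) (1 - x)),
      A.op p y x + ε ∈ Icc (0:ℝ) 1 ∧ x + ε ∈ Icc (0:ℝ) 1 := fun ε hε =>
    ⟨⟨by linarith [hfp.1, hε.1], by linarith [hε.2.trans_le (min_le_left _ _)]⟩,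
      ⟨by linarith [hx.1, hε.1], by linarith [hε.2.trans_le (min_le_right _ _)]⟩⟩
  have hg : ∀ᶠ ε in 𝓝[>] (0:ℝ), g ε < a := by
    refine eventually_lt_of_limsup_lt ?_ (isBoundedUnder_of_eventually_le (a := 1) ?_)
    · rw [← op_op_right hx hy hp ht] at ha
      exact (hUC _ ⟨hfp.1, hp1⟩ x ⟨hx.1, hx1⟩ t ht).trans_lt ha
    · filter_upwards [hsmall] with ε hε
      exact (A.mem t (Ioo_subset_Icc_self ht) _ (hmemε ε hε).1 _ (hmemε ε hε).2).2
  obtain ⟨ε, hεa, hε⟩ := (hg.and hsmall).exists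
  obtain ⟨p', hp'ε, hp'⟩ :=
    ((hcont.eventually_lt_const (lt_add_of_pos_right _ hε.1)).and (Ioo_mem_nhdsGT hp.2)).exists
  have hp'01 : p' ∈ Ioo (0:ℝ) 1 := ⟨hp.1.trans hp'.1, hp'.2⟩
  filter_upwards [Ioo_mem_nhdsGT (mul_lt_mul_of_pos_right hp'.1 ht.1)] with s hs
  have hs01 : s ∈ Ioo (0:ℝ) 1 :=
    ⟨hpt.1.trans hs.1, hs.2.trans ((mul_lt_of_lt_one_right hp'01.1 ht.2).trans hp'.2)⟩
  calc A.op s y x ≤ A.op (p' * t) y x :=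
        hmono hs01 ⟨mul_pos hp'01.1 ht.1, (mul_lt_of_lt_one_right hp'01.1 ht.2).trans hp'.2⟩ hs.2.le
    _ = A.op t (A.op p' y x) x := (op_op_right hx hy hp'01 ht).symm
    _ ≤ A.op t (A.op p y x + ε) x :=
        hMO _ (op_mem_Icc hx hy hp'01) _ (hmemε ε hε).1 x hx t ht hp'ε.le
    _ ≤ g ε := op_le_op_right hMO ht (hmemε ε hε).1 hx (hmemε ε hε).2 (by linarith [hε.1])
    _ < a := hεa

lemma op_eq_one_of_forall_gt (hMO : A.MO) (hx : x ∈ Icc (0:ℝ) 1) (hy : y ∈ Icc (0:ℝ) 1)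
    {q : ℝ} (hq : q ∈ Ioo (0:ℝ) 1) (h : ∀ s ∈ Ioo q 1, A.op s y x = 1) : A.op q y x = 1 := by
  obtain ⟨m, hm⟩ := exists_between hq.2
  have hm01 : m ∈ Ioo (0:ℝ) 1 := ⟨hq.1.trans hm.1, hm.2⟩
  have hu : q / m ∈ Ioo q 1 := by
    refine ⟨?_, (div_lt_one hm01.1).2 hm.1⟩
    rw [lt_div_iff₀ hm01.1]
    nlinarith [hq.1, hm.2]
  have hu01 : q / m ∈ Ioo (0:ℝ) 1 := ⟨hq.1.trans hu.1, hu.2⟩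
  refine le_antisymm (op_mem_Icc hx hy hq).2 ?_
  calc (1:ℝ) = A.op (q / m) y x := (h _ hu).symm
    _ ≤ A.op (q / m) 1 x := hMO y hy 1 ⟨zero_le_one, le_rfl⟩ x hx _ hu01 hy.2
    _ = A.op (q / m) (A.op m y x) x := by rw [h m hm]
    _ = A.op q y x := by rw [op_op_right hx hy hm01 hu01, mul_div_cancel₀ q hm01.1.ne']

end UCA

/-- Lemma 2.14(i), second relation: for a convex algebra on `[0,1]` satisfying (MO) and (UC),
for all `x ≤ y` in `[0,1]` and `q ∈ (0,1)`, `y ⊕_p x → y ⊕_q x` as `p → q⁺`. -/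
theorem stmt_3 (A : UCA) (hMO : A.MO) (hUC : A.UC) :
    ∀ x ∈ Set.Icc (0:ℝ) 1, ∀ y ∈ Set.Icc (0:ℝ) 1, x ≤ y → ∀ q ∈ Set.Ioo (0:ℝ) 1,
      Filter.Tendsto (fun p => A.op p y x) (𝓝[>] q) (𝓝 (A.op q y x)) := by
  intro x hx y hy hxy q hq
  show ContinuousWithinAt (fun p => A.op p y x) (Ioi q) q
  by_cases h : ∃ b ∈ Ioo q 1, A.op b y x < 1
  · obtain ⟨b, hb, hb1⟩ := h
    have hmono := UCA.monotoneOn_op hMO hx hy hxy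
    obtain ⟨p, hp, hcont⟩ :=
      (hmono.mono (Ioo_subset_Ioo hq.1.le hb.2.le)).exists_continuousWithinAt_Ioi hb.1
    have hp01 : p ∈ Ioo (0:ℝ) 1 := ⟨hq.1.trans hp.1, hp.2.trans hb.2⟩
    have hp1 : A.op p y x < 1 := (hmono hp01 ⟨hp01.1.trans hp.2, hb.2⟩ hp.2.le).trans_lt hb1
    simpa only [mul_div_cancel₀ q hp01.1.ne'] using UCA.continuousWithinAt_op_mul hMO hUC hx hy
      hxy hp01 ⟨div_pos hq.1 hp01.1, (div_lt_one hp01.1).2 hp.1⟩ hp1 hcont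
  · push Not at h
    have h1 : ∀ s ∈ Ioo q 1, A.op s y x = 1 := fun s hs =>
      le_antisymm (UCA.op_mem_Icc hx hy ⟨hq.1.trans hs.1, hs.2⟩).2 (h s hs)
    refine tendsto_const_nhds.congr' ?_
    filter_upwards [Ioo_mem_nhdsGT hq.2] with s hs
    rw [h1 s hs, UCA.op_eq_one_of_forall_gt hMO hx hy hq h1]
end

section
/- Let ⟨[0,1], ⊕_p⟩ be a convex algebra satisfying (MO) and (LC). Then for all x, y ∈ [0,1] with x ≤ y and all q ∈ (0,1], the left limit in the parameter holds: y ⊕_p x tends to y ⊕_q x as p → q from below. -/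
open Set Filter Topology

/-- Lemma 2.14(ii): for a convex algebra on `[0,1]` satisfying (MO) and (LC),
for all `x ≤ y` in `[0,1]` and `q ∈ (0,1]`, `y ⊕_p x → y ⊕_q x` as `p → q⁻`. -/
theorem stmt_4 (A : UCA) (hMO : A.MO) (hLC : A.LC) :
    ∀ x ∈ Set.Icc (0:ℝ) 1, ∀ y ∈ Set.Icc (0:ℝ) 1, x ≤ y → ∀ q ∈ Set.Ioc (0:ℝ) 1,
      Filter.Tendsto (fun p => A.op p y x) (𝓝[<] q) (𝓝 (A.op q y x)) := by
  intro x hx y hy hxy q hq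
  set f : ℝ → ℝ := fun p => A.op p y x with hfdef
  -- basic facts
  have hmemf : ∀ p ∈ Set.Ioc (0:ℝ) 1, f p ∈ Set.Icc (0:ℝ) 1 := by
    intro p hp
    rcases eq_or_lt_of_le hp.2 with h1 | h1
    · simp only [hfdef, h1]
      rw [A.proj1 y hy x hx]; exact hy
    · exact A.mem p ⟨hp.1.le, hp.2⟩ y hy x hx
  have hle_y : ∀ p ∈ Set.Ioo (0:ℝ) 1, f p ≤ y := by
    intro p hp
    have h1p : (1 - p) ∈ Set.Ioo (0:ℝ) 1 := ⟨by linarith [hp.2], by linarith [hp.1]⟩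
    calc f p = A.op (1 - p) x y := A.comm p hp y hy x hx
    _ ≤ A.op (1 - p) y y := hMO x hx y hy y hy (1 - p) h1p hxy
    _ = y := A.idem (1 - p) h1p y hy
  have hge_x : ∀ p ∈ Set.Ioo (0:ℝ) 1, x ≤ f p := by
    intro p hp
    calc x = A.op p x x := (A.idem p hp x hx).symm
    _ ≤ A.op p y x := hMO x hx y hy x hx p hp hxy
  -- monotonicity in the second argument
  have hmono2 : ∀ p ∈ Set.Ioo (0:ℝ) 1, ∀ w ∈ Set.Icc (0:ℝ) 1, ∀ w' ∈ Set.Icc (0:ℝ) 1,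
      w ≤ w' → A.op p y w ≤ A.op p y w' := by
    intro p hp w hw w' hw' hww
    have h1p : (1 - p) ∈ Set.Ioo (0:ℝ) 1 := ⟨by linarith [hp.2], by linarith [hp.1]⟩
    calc A.op p y w = A.op (1 - p) w y := A.comm p hp y hy w hw
    _ ≤ A.op (1 - p) w' y := hMO w hw w' hw' y hy (1 - p) h1p hww
    _ = A.op p y w' := (A.comm p hp y hy w' hw').symm
  -- monotonicity of f on (0,1]
  have hmono : ∀ p p' : ℝ, 0 < p → p ≤ p' → p' ≤ 1 → f p ≤ f p' := by
    intro p p' hp0 hpp hp1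
    rcases eq_or_lt_of_le hpp with rfl | hlt
    · exact le_rfl
    rcases eq_or_lt_of_le hp1 with rfl | hp1'
    case inl =>
      have h1 : f 1 = y := A.proj1 y hy x hx
      rw [h1]
      exact hle_y p ⟨hp0, hlt⟩
    -- now p < p' < 1
    have hp'0 : 0 < p' := lt_trans hp0 hlt
    set t : ℝ := p / p' with htdef
    have ht : t ∈ Set.Ioo (0:ℝ) 1 := ⟨div_pos hp0 hp'0, (div_lt_one hp'0).2 hlt⟩
    have htp : t * p' = p := div_mul_cancel₀ p (ne_of_gt hp'0)
    have hp' : p' ∈ Set.Ioo (0:ℝ) 1 := ⟨hp'0, hp1'⟩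
    have hassoc := A.assoc t ht p' hp' y hy y hy x hx
    rw [A.idem t ht y hy, htp] at hassoc
    set s : ℝ := (1 - t) * p' / (1 - p) with hsdef
    have hs : s ∈ Set.Ioo (0:ℝ) 1 := by
      constructor
      · apply div_pos (mul_pos (by linarith [ht.2]) hp'0) (by linarith [lt_trans hlt hp1'])
      · rw [div_lt_one (by linarith [lt_trans hlt hp1'])]
        nlinarith [ht.2, hp'0, htp]
    have hw : A.op s y x ∈ Set.Icc (0:ℝ) 1 := A.mem s ⟨hs.1.le, hs.2.le⟩ y hy x hx
    have hxw : x ≤ A.op s y x := hge_x s hs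
    have hpIoo : p ∈ Set.Ioo (0:ℝ) 1 := ⟨hp0, lt_trans hlt hp1'⟩
    calc f p = A.op p y x := rfl
    _ ≤ A.op p y (A.op s y x) := hmono2 p hpIoo x hx _ hw hxw
    _ = f p' := by rw [← hassoc]
  -- key lower approximation
  have hkey : ∀ a : ℝ, a < f q → ∃ p0, p0 ∈ Set.Ioo 0 q ∧ a < f p0 := by
    intro a ha
    rcases eq_or_lt_of_le hq.2 with h1 | h1
    · -- q = 1 : use LC directly
      have hLC1 := hLC x hx y hy hxy
      have hfy : f q = y := by rw [hfdef]; simp only [h1]; exact A.proj1 y hy x hx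
      have hlim : a < Filter.liminf f (𝓝[<] (1:ℝ)) := lt_of_lt_of_le (hfy ▸ ha) hLC1
      have hbdd : Filter.IsBoundedUnder (· ≥ ·) (𝓝[<] (1:ℝ)) f := by
        refine Filter.isBoundedUnder_of_eventually_ge (a := 0) ?_
        filter_upwards [Ioo_mem_nhdsLT_of_mem (Set.mem_Ioc.2 ⟨zero_lt_one, le_refl 1⟩)]
          with t ht
        exact (hmemf t ⟨ht.1, ht.2.le⟩).1
      have hev := Filter.eventually_lt_of_lt_liminf hlim hbdd
      have hev2 : ∀ᶠ t in 𝓝[<] (1:ℝ), t ∈ Set.Ioo (0:ℝ) 1 :=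
        Ioo_mem_nhdsLT_of_mem (Set.mem_Ioc.2 ⟨zero_lt_one, le_refl 1⟩)
      obtain ⟨t0, ht0a, ht0m⟩ := (hev.and hev2).exists
      exact ⟨t0, by rw [h1]; exact ht0m, ht0a⟩
    · -- q < 1
      have hqIoo : q ∈ Set.Ioo (0:ℝ) 1 := ⟨hq.1, h1⟩
      have hfq : f q ∈ Set.Icc (0:ℝ) 1 := hmemf q hq
      have hxfq : x ≤ f q := hge_x q hqIoo
      have hLCq := hLC x hx (f q) hfq hxfq
      have hlim : a < Filter.liminf (fun t => A.op t (f q) x) (𝓝[<] (1:ℝ)) :=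
        lt_of_lt_of_le ha hLCq
      have hbdd : Filter.IsBoundedUnder (· ≥ ·) (𝓝[<] (1:ℝ)) (fun t => A.op t (f q) x) := by
        refine Filter.isBoundedUnder_of_eventually_ge (a := 0) ?_
        filter_upwards [Ioo_mem_nhdsLT_of_mem (Set.mem_Ioc.2 ⟨zero_lt_one, le_refl 1⟩)]
          with t ht
        exact (A.mem t ⟨ht.1.le, ht.2.le⟩ (f q) hfq x hx).1
      have hev := Filter.eventually_lt_of_lt_liminf hlim hbdd
      have hev2 : ∀ᶠ t in 𝓝[<] (1:ℝ), t ∈ Set.Ioo (0:ℝ) 1 :=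
        Ioo_mem_nhdsLT_of_mem (Set.mem_Ioc.2 ⟨zero_lt_one, le_refl 1⟩)
      obtain ⟨t0, ht0a, ht0m⟩ := (hev.and hev2).exists
      -- identity : op t0 (f q) x = f (q * t0)
      have hassoc := A.assoc q hqIoo t0 ht0m y hy x hx x hx
      have hs' : ((1 - q) * t0 / (1 - q * t0)) ∈ Set.Ioo (0:ℝ) 1 := by
        have hqt : q * t0 < 1 := by nlinarith [hqIoo.1, hqIoo.2, ht0m.1, ht0m.2]
        constructor
        · exact div_pos (mul_pos (by linarith [hqIoo.2]) ht0m.1) (by linarith)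
        · rw [div_lt_one (by linarith)]
          nlinarith [hqIoo.1, ht0m.2]
      rw [A.idem _ hs' x hx] at hassoc
      refine ⟨q * t0, ⟨mul_pos hqIoo.1 ht0m.1, ?_⟩, ?_⟩
      · nlinarith [hqIoo.1, ht0m.2]
      · show a < A.op (q * t0) y x
        rw [← hassoc]
        exact ht0a
  -- conclude via order topology
  rw [show A.op q y x = f q from rfl]
  rw [tendsto_order]
  constructor
  · intro a ha
    obtain ⟨p0, hp0, hap0⟩ := hkey a ha
    filter_upwards [Ioo_mem_nhdsLT_of_mem (Set.mem_Ioc.2 ⟨hp0.2, le_refl q⟩)] with p hp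
    exact lt_of_lt_of_le hap0 (hmono p0 p hp0.1 hp.1.le (le_trans hp.2.le hq.2))
  · intro b hb
    filter_upwards [Ioo_mem_nhdsLT_of_mem (Set.mem_Ioc.2 ⟨hq.1, le_refl q⟩)] with p hp
    exact lt_of_le_of_lt (hmono p q hp.1 hp.2.le hq.2) hb
end

section
/- Let ⟨[0,1], ⊕_p⟩ be a convex algebra satisfying (MO), (UC) and (LC), and let x, y ∈ [0,1] with x ≤ y. Then the restriction of the map Γ_{x,y}(t) = y ⊕_t x to the half-open interval (0,1] is continuous. -/
open Set Filter Topology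

namespace UCAproof

variable {A : UCA} {u v : ℝ}

lemma memG (hu : u ∈ Set.Icc (0:ℝ) 1) (hv : v ∈ Set.Icc (0:ℝ) 1)
    {t : ℝ} (ht : t ∈ Set.Icc (0:ℝ) 1) : A.op t v u ∈ Set.Icc (0:ℝ) 1 :=
  A.mem t ht v hv u hu

/-- second-argument monotonicity -/
lemma mo2 (hMO : A.MO) {a z z' p : ℝ} (ha : a ∈ Set.Icc (0:ℝ) 1)
    (hz : z ∈ Set.Icc (0:ℝ) 1) (hz' : z' ∈ Set.Icc (0:ℝ) 1)
    (hp : p ∈ Set.Ioo (0:ℝ) 1) (h : z ≤ z') : A.op p a z ≤ A.op p a z' := by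
  have hp' : (1 - p) ∈ Set.Ioo (0:ℝ) 1 := ⟨by linarith [hp.2], by linarith [hp.1]⟩
  rw [A.comm p hp a ha z hz, A.comm p hp a ha z' hz']
  exact hMO z hz z' hz' a ha (1-p) hp' h

/-- `u ≤ v ⊕_t u` -/
lemma le_G (hMO : A.MO) (hu : u ∈ Set.Icc (0:ℝ) 1) (hv : v ∈ Set.Icc (0:ℝ) 1)
    (huv : u ≤ v) {t : ℝ} (ht : t ∈ Set.Ioc (0:ℝ) 1) : u ≤ A.op t v u := by
  rcases eq_or_lt_of_le ht.2 with h1 | h1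
  · rw [h1, A.proj1 v hv u hu]; exact huv
  · have ht' : t ∈ Set.Ioo (0:ℝ) 1 := ⟨ht.1, h1⟩
    have := hMO u hu v hv u hu t ht' huv
    rwa [A.idem t ht' u hu] at this

/-- `v ⊕_t u ≤ v` -/
lemma G_le (hMO : A.MO) (hu : u ∈ Set.Icc (0:ℝ) 1) (hv : v ∈ Set.Icc (0:ℝ) 1)
    (huv : u ≤ v) {t : ℝ} (ht : t ∈ Set.Ioc (0:ℝ) 1) : A.op t v u ≤ v := by
  rcases eq_or_lt_of_le ht.2 with h1 | h1
  · rw [h1, A.proj1 v hv u hu]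
  · have ht' : t ∈ Set.Ioo (0:ℝ) 1 := ⟨ht.1, h1⟩
    have := mo2 hMO hv hu hv ht' huv
    rwa [A.idem t ht' v hv] at this

/-- F1 : `(v ⊕_p u) ⊕_s u = v ⊕_{ps} u` -/
lemma F1 (hu : u ∈ Set.Icc (0:ℝ) 1) (hv : v ∈ Set.Icc (0:ℝ) 1)
    {p s : ℝ} (hp : p ∈ Set.Ioo (0:ℝ) 1) (hs : s ∈ Set.Ioc (0:ℝ) 1) :
    A.op s (A.op p v u) u = A.op (p * s) v u := by
  rcases eq_or_lt_of_le hs.2 with h1 | h1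
  · rw [h1, mul_one, A.proj1 (A.op p v u) (memG hu hv ⟨le_of_lt hp.1, le_of_lt hp.2⟩) u hu]
  · have hs' : s ∈ Set.Ioo (0:ℝ) 1 := ⟨hs.1, h1⟩
    have hps : p * s < 1 := by nlinarith [hp.1, hp.2, hs.1, hs'.2]
    have hc : (1 - p) * s / (1 - p * s) ∈ Set.Ioo (0:ℝ) 1 := by
      constructor
      · apply div_pos (by nlinarith [hp.2, hs.1]) (by linarith)
      · rw [div_lt_one (by linarith)]; nlinarith [hp.1, hs'.2]
    rw [A.assoc p hp s hs' v hv u hu u hu, A.idem _ hc u hu]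

/-- F2 : `v ⊕_a (v ⊕_b u) = v ⊕_{a + b(1-a)} u` -/
lemma F2 (hu : u ∈ Set.Icc (0:ℝ) 1) (hv : v ∈ Set.Icc (0:ℝ) 1)
    {a b : ℝ} (ha : a ∈ Set.Ioo (0:ℝ) 1) (hb : b ∈ Set.Ioo (0:ℝ) 1) :
    A.op a v (A.op b v u) = A.op (a + b * (1 - a)) v u := by
  set q := a + b * (1 - a) with hq
  have hq0 : 0 < q := by nlinarith [ha.1, ha.2, hb.1]
  have hq1 : q < 1 := by nlinarith [ha.2, hb.2]
  have hqIoo : q ∈ Set.Ioo (0:ℝ) 1 := ⟨hq0, hq1⟩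
  have hpIoo : a / q ∈ Set.Ioo (0:ℝ) 1 := by
    constructor
    · exact div_pos ha.1 hq0
    · rw [div_lt_one hq0]; nlinarith [hb.1, ha.2]
  have key := A.assoc (a/q) hpIoo q hqIoo v hv v hv u hu
  rw [A.idem (a/q) hpIoo v hv] at key
  have h1 : a / q * q = a := div_mul_cancel₀ a (ne_of_gt hq0)
  rw [h1] at key
  have h2 : (1 - a/q) * q / (1 - a) = b := by
    have ha1 : (1:ℝ) - a ≠ 0 := by linarith [ha.2]
    have : (1 - a/q) * q = b * (1 - a) := by field_simp; ring
    rw [this, mul_div_assoc, div_self ha1, mul_one]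
  rw [h2] at key
  exact key.symm

/-- monotonicity of `t ↦ v ⊕_t u` on `(0,1]` when `u ≤ v` -/
lemma monoG (hMO : A.MO) (hu : u ∈ Set.Icc (0:ℝ) 1) (hv : v ∈ Set.Icc (0:ℝ) 1)
    (huv : u ≤ v) {t t' : ℝ} (ht : t ∈ Set.Ioc (0:ℝ) 1) (ht' : t' ∈ Set.Ioc (0:ℝ) 1)
    (h : t ≤ t') : A.op t v u ≤ A.op t' v u := by
  rcases eq_or_lt_of_le h with h1 | h1
  · rw [h1]
  rcases eq_or_lt_of_le ht'.2 with h2 | h2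
  · subst h2
    rw [A.proj1 v hv u hu]
    exact G_le hMO hu hv huv ht
  · have ht'Ioo : t' ∈ Set.Ioo (0:ℝ) 1 := ⟨ht'.1, h2⟩
    have hpIoo : t / t' ∈ Set.Ioo (0:ℝ) 1 :=
      ⟨div_pos ht.1 ht'.1, by rw [div_lt_one ht'.1]; exact h1⟩
    have key : A.op t' (A.op (t/t') v u) u = A.op t v u := by
      rw [F1 hu hv hpIoo (Set.mem_Ioc_of_Ioo ht'Ioo),
        div_mul_cancel₀ t (ne_of_gt ht'.1)]
    rw [← key]
    exact hMO (A.op (t/t') v u) (memG hu hv (Set.mem_Icc_of_Ioo hpIoo)) v hv u hu t' ht'Ioo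
      (G_le hMO hu hv huv (Set.mem_Ioc_of_Ioo hpIoo))

/-- combination identity: `(v ⊕_{t₀} u) ⊕_p (v ⊕_b u) = v ⊕_{t₀p + b(1-p)} u` -/
lemma combG (hu : u ∈ Set.Icc (0:ℝ) 1) (hv : v ∈ Set.Icc (0:ℝ) 1)
    {t₀ b p : ℝ} (ht₀ : t₀ ∈ Set.Ioc (0:ℝ) 1) (hb : b ∈ Set.Ioo (0:ℝ) 1)
    (hp : p ∈ Set.Ioo (0:ℝ) 1) :
    A.op p (A.op t₀ v u) (A.op b v u) = A.op (t₀ * p + b * (1 - p)) v u := by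
  have hbI : A.op b v u ∈ Set.Icc (0:ℝ) 1 := memG hu hv (Set.mem_Icc_of_Ioo hb)
  rcases eq_or_lt_of_le ht₀.2 with h2 | h2
  · subst h2
    rw [A.proj1 v hv u hu, F2 hu hv hp hb]
    ring_nf
  · have ht₀' : t₀ ∈ Set.Ioo (0:ℝ) 1 := ⟨ht₀.1, h2⟩
    have h1p : 0 < 1 - t₀ * p := by nlinarith [ht₀'.2, hp.1, hp.2, ht₀.1]
    set c := (1 - t₀) * p / (1 - t₀ * p) with hc
    have hcIoo : c ∈ Set.Ioo (0:ℝ) 1 := by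
      constructor
      · exact div_pos (by nlinarith [ht₀'.2, hp.1]) h1p
      · rw [div_lt_one h1p]; nlinarith [ht₀.1, hp.2]
    have h1c : 1 - c ∈ Set.Ioo (0:ℝ) 1 := ⟨by linarith [hcIoo.2], by linarith [hcIoo.1]⟩
    have key := A.assoc t₀ ht₀' p hp v hv u hu (A.op b v u) hbI
    rw [← hc] at key
    have step : A.op c u (A.op b v u) = A.op (b * (1 - c)) v u := by
      rw [A.comm c hcIoo u hu (A.op b v u) hbI]
      exact F1 hu hv hb (Set.mem_Ioc_of_Ioo h1c)
    rw [step] at key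
    have harith : t₀ * p + b * (1 - c) * (1 - t₀ * p) = t₀ * p + b * (1 - p) := by
      have h := hc ▸ (by field_simp; ring : (1 - (1 - t₀) * p / (1 - t₀ * p)) * (1 - t₀ * p) = 1 - p)
      rw [mul_assoc, h]
    have key2 : A.op (t₀ * p) v (A.op (b * (1-c)) v u) = A.op (t₀ * p + b * (1-c) * (1 - t₀*p)) v u := by
      have htp : t₀ * p ∈ Set.Ioo (0:ℝ) 1 := ⟨mul_pos ht₀.1 hp.1, by linarith⟩
      have hbc : b * (1 - c) ∈ Set.Ioo (0:ℝ) 1 :=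
        ⟨mul_pos hb.1 h1c.1, by nlinarith [hb.2, h1c.2, hb.1, h1c.1]⟩
      exact F2 hu hv htp hbc
    rw [key, key2, harith]

/-- left approximation (uses LC) -/
lemma left_approx (hMO : A.MO) (hLC : A.LC) (hu : u ∈ Set.Icc (0:ℝ) 1)
    (hv : v ∈ Set.Icc (0:ℝ) 1) (huv : u ≤ v) {t₀ δ : ℝ} (ht₀ : t₀ ∈ Set.Ioc (0:ℝ) 1)
    (hδ : 0 < δ) : ∃ t ∈ Set.Ioo (0:ℝ) t₀, A.op t₀ v u - δ ≤ A.op t v u := by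
  set b := t₀ / 2 with hbdef
  have hb : b ∈ Set.Ioo (0:ℝ) t₀ := ⟨half_pos ht₀.1, by linarith [ht₀.1]⟩
  have hbIoo : b ∈ Set.Ioo (0:ℝ) 1 := ⟨hb.1, by linarith [ht₀.2, hb.2]⟩
  have hGb : A.op b v u ∈ Set.Icc (0:ℝ) 1 := memG hu hv (Set.mem_Icc_of_Ioo hbIoo)
  have hGt₀ : A.op t₀ v u ∈ Set.Icc (0:ℝ) 1 := memG hu hv (Set.mem_Icc_of_Ioc ht₀)
  have hle : A.op b v u ≤ A.op t₀ v u :=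
    monoG hMO hu hv huv (Set.mem_Ioc_of_Ioo hbIoo) ht₀ (le_of_lt hb.2)
  have hlim := hLC (A.op b v u) hGb (A.op t₀ v u) hGt₀ hle
  have hevIoo : ∀ᶠ p in 𝓝[<] (1:ℝ), p ∈ Set.Ioo (0:ℝ) 1 :=
    Ioo_mem_nhdsLT_of_mem (by constructor <;> norm_num)
  have hbdd : Filter.IsBoundedUnder (· ≥ ·) (𝓝[<] (1:ℝ))
      (fun p => A.op p (A.op t₀ v u) (A.op b v u)) := by
    refine ⟨0, Filter.eventually_map.2 ?_⟩
    filter_upwards [hevIoo] with p hp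
    exact (A.mem p (Set.mem_Icc_of_Ioo hp) _ hGt₀ _ hGb).1
  have hlt : ∀ᶠ p in 𝓝[<] (1:ℝ),
      A.op t₀ v u - δ < A.op p (A.op t₀ v u) (A.op b v u) :=
    Filter.eventually_lt_of_lt_liminf (lt_of_lt_of_le (by linarith) hlim) hbdd
  obtain ⟨p, hp1, hp2⟩ := (hlt.and hevIoo).exists
  refine ⟨t₀ * p + b * (1 - p), ⟨?_, ?_⟩, ?_⟩
  · nlinarith [ht₀.1, hp2.1, hb.1, hp2.2]
  · nlinarith [hp2.2, hb.2, hp2.1, ht₀.1]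
  · rw [← combG hu hv ht₀ hbIoo hp2]
    exact le_of_lt hp1


/-- consequence of UC + structure: good ε approximation from above -/
lemma uc_approx (hUC : A.UC) {w₁ w₂ p δ : ℝ} (hw₁ : w₁ ∈ Set.Ico (0:ℝ) 1)
    (hw₂ : w₂ ∈ Set.Ico (0:ℝ) 1) (hp : p ∈ Set.Ioo (0:ℝ) 1) (hδ : 0 < δ) :
    ∃ ε > 0, w₁ + ε ≤ 1 ∧ w₂ + ε ≤ 1 ∧
      A.op p (w₁ + ε) (w₂ + ε) ≤ A.op p w₁ w₂ + δ := by
  have hlim := hUC w₁ hw₁ w₂ hw₂ p hp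
  set m := min (1 - w₁) (1 - w₂) with hm
  have hm0 : 0 < m := lt_min (by linarith [hw₁.2]) (by linarith [hw₂.2])
  have hevIoo : ∀ᶠ ε in 𝓝[>] (0:ℝ), ε ∈ Set.Ioo (0:ℝ) m :=
    Ioo_mem_nhdsGT_of_mem ⟨le_refl 0, hm0⟩
  have hbdd : Filter.IsBoundedUnder (· ≤ ·) (𝓝[>] (0:ℝ))
      (fun ε => A.op p (w₁ + ε) (w₂ + ε)) := by
    refine ⟨1, Filter.eventually_map.2 ?_⟩
    filter_upwards [hevIoo] with ε hε
    have h1 : w₁ + ε ∈ Set.Icc (0:ℝ) 1 :=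
      ⟨by linarith [hw₁.1, hε.1], by have := min_le_left (1-w₁) (1-w₂); linarith [hε.2]⟩
    have h2 : w₂ + ε ∈ Set.Icc (0:ℝ) 1 :=
      ⟨by linarith [hw₂.1, hε.1], by have := min_le_right (1-w₁) (1-w₂); linarith [hε.2]⟩
    exact (A.mem p (Set.mem_Icc_of_Ioo hp) _ h1 _ h2).2
  have hlt : ∀ᶠ ε in 𝓝[>] (0:ℝ),
      A.op p (w₁ + ε) (w₂ + ε) < A.op p w₁ w₂ + δ :=
    Filter.eventually_lt_of_limsup_lt (lt_of_le_of_lt hlim (by linarith)) hbdd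
  obtain ⟨ε, hε1, hε2⟩ := (hlt.and hevIoo).exists
  refine ⟨ε, hε2.1, ?_, ?_, le_of_lt hε1⟩
  · have := min_le_left (1-w₁) (1-w₂); linarith [hε2.2]
  · have := min_le_right (1-w₁) (1-w₂); linarith [hε2.2]

/-- main right-continuity lemma, for `v < 1` -/
lemma right_main (hMO : A.MO) (hUC : A.UC) (hLC : A.LC) (hu : u ∈ Set.Icc (0:ℝ) 1)
    (hv : v ∈ Set.Icc (0:ℝ) 1) (huv : u ≤ v) (hv1 : v < 1) {t₀ δ : ℝ}
    (ht₀ : t₀ ∈ Set.Ioo (0:ℝ) 1) (hδ : 0 < δ) :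
    ∃ t ∈ Set.Ioc (0:ℝ) 1, t₀ < t ∧ A.op t v u ≤ A.op t₀ v u + δ := by
  set W := sInf ((fun p => A.op p v u) '' Set.Ioc (0:ℝ) 1) with hW
  have himg : ((fun p => A.op p v u) '' Set.Ioc (0:ℝ) 1).Nonempty :=
    ⟨A.op 1 v u, 1, ⟨zero_lt_one, le_refl 1⟩, rfl⟩
  have hbdd : BddBelow ((fun p => A.op p v u) '' Set.Ioc (0:ℝ) 1) := by
    refine ⟨0, fun w hw => ?_⟩
    obtain ⟨t, ht, rfl⟩ := hw
    exact (memG hu hv (Set.mem_Icc_of_Ioc ht)).1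
  have hWle : ∀ t ∈ Set.Ioc (0:ℝ) 1, W ≤ A.op t v u := fun t ht =>
    csInf_le hbdd ⟨t, ht, rfl⟩
  have hW0 : 0 ≤ W := le_csInf himg (fun w hw => by
    obtain ⟨t, ht, rfl⟩ := hw; exact (memG hu hv (Set.mem_Icc_of_Ioc ht)).1)
  have hWv : W ≤ v := by
    have := hWle 1 ⟨zero_lt_one, le_refl 1⟩
    rwa [A.proj1 v hv u hu] at this
  have hWIcc : W ∈ Set.Icc (0:ℝ) 1 := ⟨hW0, le_trans hWv hv.2⟩
  -- step (a): find t > t₀ with  op t v u ≤ op t₀ v W + δ/3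
  obtain ⟨ε, hε0, hvε, hWε, hUCest⟩ := uc_approx hUC (⟨hv.1, hv1⟩ : v ∈ Set.Ico (0:ℝ) 1)
    (⟨hW0, lt_of_le_of_lt hWv hv1⟩ : W ∈ Set.Ico (0:ℝ) 1) ht₀ (by linarith : 0 < δ/3)
  obtain ⟨w, hwmem, hwlt⟩ := exists_lt_of_csInf_lt himg (by linarith : W < W + ε)
  obtain ⟨b₀, hb₀, rfl⟩ := hwmem
  set b := b₀ / 2 with hbdef
  have hbIoo : b ∈ Set.Ioo (0:ℝ) 1 := ⟨half_pos hb₀.1, by linarith [hb₀.2, half_pos hb₀.1]⟩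
  have hGb_le : A.op b v u ≤ W + ε := le_of_lt (lt_of_le_of_lt
    (monoG hMO hu hv huv (Set.mem_Ioc_of_Ioo hbIoo) hb₀ (by linarith [hb₀.1])) hwlt)
  set t := t₀ + b * (1 - t₀) with htdef
  have htIoo : t ∈ Set.Ioo (0:ℝ) 1 := by
    constructor
    · nlinarith [ht₀.1, hbIoo.1, ht₀.2]
    · nlinarith [hbIoo.2, ht₀.2]
  have ht_gt : t₀ < t := by nlinarith [hbIoo.1, ht₀.2]
  have hstepa : A.op t v u ≤ A.op t₀ v W + δ/3 := by
    have e1 : A.op t v u = A.op t₀ v (A.op b v u) := (F2 hu hv ht₀ hbIoo).symm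
    have hGbIcc : A.op b v u ∈ Set.Icc (0:ℝ) 1 := memG hu hv (Set.mem_Icc_of_Ioo hbIoo)
    have hWεIcc : W + ε ∈ Set.Icc (0:ℝ) 1 := ⟨by linarith, hWε⟩
    have hvεIcc : v + ε ∈ Set.Icc (0:ℝ) 1 := ⟨by linarith [hv.1], hvε⟩
    have e2 : A.op t₀ v (A.op b v u) ≤ A.op t₀ v (W + ε) :=
      mo2 hMO hv hGbIcc hWεIcc ht₀ hGb_le
    have e3 : A.op t₀ v (W + ε) ≤ A.op t₀ (v + ε) (W + ε) :=
      hMO v hv (v + ε) hvεIcc (W + ε) hWεIcc t₀ ht₀ (by linarith)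
    calc A.op t v u = A.op t₀ v (A.op b v u) := e1
      _ ≤ A.op t₀ v (W + ε) := e2
      _ ≤ A.op t₀ (v + ε) (W + ε) := e3
      _ ≤ A.op t₀ v W + δ/3 := hUCest
  -- step (b): left approx for the pair (W, v) at t₀
  obtain ⟨t₁, ht₁, hstepb⟩ := left_approx hMO hLC hWIcc hv (le_trans hWv (le_refl v))
    (Set.mem_Ioc_of_Ioo ht₀) (by linarith : 0 < δ/3)
  -- step (c): op t₁ v W ≤ op t₀ v u
  have hstepc : A.op t₁ v W ≤ A.op t₀ v u := by
    have ht₁Ioo : t₁ ∈ Set.Ioo (0:ℝ) 1 := ⟨ht₁.1, lt_trans ht₁.2 ht₀.2⟩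
    set b' := (t₀ - t₁) / (1 - t₁) with hb'def
    have h1t₁ : 0 < 1 - t₁ := by linarith [ht₁Ioo.2]
    have hb' : b' ∈ Set.Ioo (0:ℝ) 1 := by
      constructor
      · exact div_pos (by linarith [ht₁.2]) h1t₁
      · rw [div_lt_one h1t₁]; linarith [ht₀.2]
    have hWGb' : W ≤ A.op b' v u := hWle b' (Set.mem_Ioc_of_Ioo hb')
    have e1 : A.op t₁ v W ≤ A.op t₁ v (A.op b' v u) :=
      mo2 hMO hv hWIcc (memG hu hv (Set.mem_Icc_of_Ioo hb')) ht₁Ioo hWGb'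
    have e2 : A.op t₁ v (A.op b' v u) = A.op (t₁ + b' * (1 - t₁)) v u :=
      F2 hu hv ht₁Ioo hb'
    have e3 : t₁ + b' * (1 - t₁) = t₀ := by
      rw [hb'def, div_mul_cancel₀ _ (ne_of_gt h1t₁)]; ring
    rw [e2, e3] at e1
    exact e1
  exact ⟨t, Set.mem_Ioc_of_Ioo htIoo, ht_gt, by linarith⟩


/-- full right-continuity approximation -/
lemma right_full (hMO : A.MO) (hUC : A.UC) (hLC : A.LC) (hu : u ∈ Set.Icc (0:ℝ) 1)
    (hv : v ∈ Set.Icc (0:ℝ) 1) (huv : u ≤ v) {t₀ δ : ℝ}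
    (ht₀ : t₀ ∈ Set.Ioo (0:ℝ) 1) (hδ : 0 < δ) :
    ∃ t ∈ Set.Ioc (0:ℝ) 1, t₀ < t ∧ A.op t v u ≤ A.op t₀ v u + δ := by
  by_cases hall : ∀ s ∈ Set.Ioo t₀ 1, A.op s v u = 1
  · -- Γ ≡ 1 on (t₀,1), deduce Γ(t₀) = 1
    set r := Real.sqrt t₀ with hr
    have hr0 : 0 ≤ r := Real.sqrt_nonneg t₀
    have hrr : r * r = t₀ := Real.mul_self_sqrt (le_of_lt ht₀.1)
    have hr1 : r < 1 := by nlinarith [ht₀.2]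
    have hrpos : 0 < r := by nlinarith [ht₀.1]
    set s := (r + 1) / 2 with hs
    have hsIoo : s ∈ Set.Ioo (0:ℝ) 1 := ⟨by positivity, by rw [hs]; linarith⟩
    have hrs : r < s := by rw [hs]; linarith
    have ht₀s : t₀ < s := by nlinarith
    have hs2 : t₀ < s * s := by nlinarith
    have hq : t₀ / s ∈ Set.Ioo t₀ 1 := by
      constructor
      · rw [lt_div_iff₀ hsIoo.1]; nlinarith [ht₀.1, hsIoo.2]
      · rw [div_lt_one hsIoo.1]; exact ht₀s
    have hqIoo : t₀ / s ∈ Set.Ioo (0:ℝ) 1 := ⟨lt_trans ht₀.1 hq.1, hq.2⟩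
    have h1 : A.op (t₀/s) v u = 1 := hall _ hq
    have h2 : A.op s v u = 1 := hall _ ⟨ht₀s, hsIoo.2⟩
    have h3 : A.op (s*s) v u = 1 := hall _ ⟨hs2, by nlinarith [hsIoo.2, hsIoo.1]⟩
    have e1 : A.op s (A.op (t₀/s) v u) u = A.op (t₀/s*s) v u :=
      F1 hu hv hqIoo (Set.mem_Ioc_of_Ioo hsIoo)
    have e2 : A.op s (A.op s v u) u = A.op (s*s) v u :=
      F1 hu hv hsIoo (Set.mem_Ioc_of_Ioo hsIoo)
    rw [h1] at e1
    rw [h2] at e2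
    have e3 : t₀ / s * s = t₀ := div_mul_cancel₀ t₀ (ne_of_gt hsIoo.1)
    have hGt₀ : A.op t₀ v u = 1 := by rw [← e3, ← e1, e2, h3]
    refine ⟨(t₀ + 1)/2, ⟨by linarith [ht₀.1], by linarith [ht₀.2]⟩, by linarith [ht₀.2], ?_⟩
    have : A.op ((t₀+1)/2) v u = 1 := hall _ ⟨by linarith [ht₀.2], by linarith [ht₀.2]⟩
    rw [this, hGt₀]; linarith
  · push_neg at hall
    obtain ⟨s, hsmem, hsne⟩ := hall
    have hsIoo : s ∈ Set.Ioo (0:ℝ) 1 := ⟨lt_trans ht₀.1 hsmem.1, hsmem.2⟩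
    set v' := A.op s v u with hv'
    have hv'Icc : v' ∈ Set.Icc (0:ℝ) 1 := memG hu hv (Set.mem_Icc_of_Ioo hsIoo)
    have hv'1 : v' < 1 := lt_of_le_of_ne hv'Icc.2 hsne
    have huv' : u ≤ v' := le_G hMO hu hv huv (Set.mem_Ioc_of_Ioo hsIoo)
    have ht₀' : t₀ / s ∈ Set.Ioo (0:ℝ) 1 := by
      constructor
      · exact div_pos ht₀.1 hsIoo.1
      · rw [div_lt_one hsIoo.1]; exact hsmem.1
    obtain ⟨t', ht', ht'gt, ht'le⟩ :=
      right_main hMO hUC hLC hu hv'Icc huv' hv'1 ht₀' hδ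
    have e1 : A.op t' v' u = A.op (s * t') v u := F1 hu hv hsIoo ht'
    have e2 : A.op (t₀/s) v' u = A.op t₀ v u := by
      rw [hv', F1 hu hv hsIoo (Set.mem_Ioc_of_Ioo ht₀'),
        mul_div_cancel₀ t₀ (ne_of_gt hsIoo.1)]
    refine ⟨s * t', ⟨mul_pos hsIoo.1 ht'.1, ?_⟩, ?_, ?_⟩
    · nlinarith [hsIoo.2, ht'.2, ht'.1]
    · calc t₀ = s * (t₀ / s) := by rw [mul_div_cancel₀ t₀ (ne_of_gt hsIoo.1)]
        _ < s * t' := by exact mul_lt_mul_of_pos_left ht'gt hsIoo.1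
    · rw [← e1, ← e2]; exact ht'le


end UCAproof

/-- Corollary 2.15: for a convex algebra on `[0,1]` satisfying (MO), (UC), (LC),
and `x ≤ y` in `[0,1]`, the restriction of `Γ_{x,y} : t ↦ y ⊕_t x` to `(0,1]`
is continuous. -/
theorem stmt_5 (A : UCA) (hMO : A.MO) (hUC : A.UC) (hLC : A.LC)
    (x y : ℝ) (hx : x ∈ Set.Icc (0:ℝ) 1) (hy : y ∈ Set.Icc (0:ℝ) 1) (hxy : x ≤ y) :
    ContinuousOn (fun t => A.op t y x) (Set.Ioc (0:ℝ) 1) := by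
  intro t₀ ht₀
  rw [Metric.continuousWithinAt_iff]
  intro ε hε
  obtain ⟨t₁, ht₁, hL⟩ := UCAproof.left_approx hMO hLC hx hy hxy ht₀ (half_pos hε)
  have ht₁Ioc : t₁ ∈ Set.Ioc (0:ℝ) 1 := ⟨ht₁.1, le_trans (le_of_lt ht₁.2) ht₀.2⟩
  rcases lt_or_eq_of_le ht₀.2 with h2 | h2
  · obtain ⟨t₂, ht₂, ht₂gt, hR⟩ :=
      UCAproof.right_full hMO hUC hLC hx hy hxy ⟨ht₀.1, h2⟩ (half_pos hε)
    refine ⟨min (t₀ - t₁) (t₂ - t₀), lt_min (by linarith [ht₁.2]) (by linarith), ?_⟩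
    intro t ht hdist
    rw [Real.dist_eq] at hdist
    rw [Real.dist_eq]
    show |A.op t y x - A.op t₀ y x| < ε
    have habs := abs_lt.1 hdist
    have hmin1 := min_le_left (t₀ - t₁) (t₂ - t₀)
    have hmin2 := min_le_right (t₀ - t₁) (t₂ - t₀)
    have h1 : t₁ ≤ t := by linarith [habs.1]
    have h3 : t ≤ t₂ := by linarith [habs.2]
    have m1 : A.op t₁ y x ≤ A.op t y x := UCAproof.monoG hMO hx hy hxy ht₁Ioc ht h1
    have m2 : A.op t y x ≤ A.op t₂ y x := UCAproof.monoG hMO hx hy hxy ht ht₂ h3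
    rw [abs_lt]
    constructor <;> linarith
  · subst h2
    refine ⟨1 - t₁, by linarith [ht₁.2], ?_⟩
    intro t ht hdist
    rw [Real.dist_eq] at hdist
    rw [Real.dist_eq]
    show |A.op t y x - A.op 1 y x| < ε
    have habs := abs_lt.1 hdist
    have h1 : t₁ ≤ t := by linarith [habs.1]
    have m1 : A.op t₁ y x ≤ A.op t y x := UCAproof.monoG hMO hx hy hxy ht₁Ioc ht h1
    have m2 : A.op t y x ≤ A.op 1 y x :=
      UCAproof.monoG hMO hx hy hxy ht ⟨zero_lt_one, le_refl 1⟩ ht.2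
    rw [abs_lt]
    constructor <;> linarith
end

section
/- Let ⟨[0,1], ⊕_p⟩ be a convex algebra satisfying (MO) and (LC). Then a one-sided cancellation law holds: for all x, y, z ∈ [0,1] and p ∈ (0,1), if x ⊕_p z = y ⊕_p z, z ≤ x and z ≤ y, then x = y. -/
/-!
Assume `x ≤ y` and put `w t = y ⊕_t x`, so that `x ≤ w t` by (MO). Associativity propagates
`x ⊕_p z = y ⊕_p z` to every smaller parameter, and from there to `w t ⊕_p z = x ⊕_p z`.
For `q ∈ (p,1)` pick `κ ∈ (0,1)` with `(1-κ)q/(1-κq) = p`; associativity then gives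
`w t ⊕_q z = w (tκ) ⊕_q z` and `x ⊕_q z = w (1-κ) ⊕_q z`. By (MO) the map `t ↦ w t ⊕_q z` is
monotone, so invariance under `t ↦ tκ` makes it constant, whence `w t ⊕_q z = x ⊕_q z ≤ x`.
Letting `q → 1` with (LC) gives `w t ≤ x`, and letting `t → 1` gives `y ≤ x`.
-/

open Set Filter Topology

lemma MonotoneOn.le_of_mul_invariant {α : Type*} [Preorder α] {f : ℝ → α} {κ : ℝ}
    (hκ : κ ∈ Ioo (0:ℝ) 1) (hf : MonotoneOn f (Ioo 0 1))
    (hinv : ∀ t ∈ Ioo (0:ℝ) 1, f (t * κ) = f t) {s t : ℝ} (hs : s ∈ Ioo (0:ℝ) 1)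
    (ht : t ∈ Ioo (0:ℝ) 1) : f t ≤ f s := by
  have hpow : ∀ n : ℕ, t * κ ^ n ∈ Ioo (0:ℝ) 1 ∧ f (t * κ ^ n) = f t := by
    intro n
    induction n with
    | zero => simpa using ht
    | succ n ih =>
      rw [pow_succ, ← mul_assoc]
      exact ⟨⟨mul_pos ih.1.1 hκ.1, mul_lt_one_of_nonneg_of_lt_one_left ih.1.1.le ih.1.2 hκ.2.le⟩,
        (hinv _ ih.1).trans ih.2⟩
  obtain ⟨n, hn⟩ := exists_pow_lt_of_lt_one hs.1 hκ.2
  have hle : t * κ ^ n ≤ s :=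
    (mul_le_of_le_one_left (pow_pos hκ.1 n).le ht.2.le).trans hn.le
  exact (hpow n).2 ▸ hf (hpow n).1 hs hle

lemma one_sub_mul_div_mem_Ioo {s q : ℝ} (hs : s ∈ Ioo (0:ℝ) 1) (hq : q ∈ Ioo (0:ℝ) 1) :
    (1 - s) * q / (1 - s * q) ∈ Ioo (0:ℝ) 1 := by
  have hd : 0 < 1 - s * q := by nlinarith [hs.1, hs.2, hq.1, hq.2]
  refine ⟨div_pos (mul_pos (by linarith [hs.2]) hq.1) hd, ?_⟩
  rw [div_lt_one hd]
  nlinarith [hs.1, hq.2]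

lemma exists_one_sub_mul_div_eq {p q : ℝ} (hp : 0 < p) (hpq : p < q) (hq : q < 1) :
    ∃ κ ∈ Ioo (0:ℝ) 1, (1 - κ) * q / (1 - κ * q) = p := by
  have hq0 : 0 < q := hp.trans hpq
  have h1p : 0 < 1 - p := by linarith
  refine ⟨(q - p) / ((1 - p) * q), ⟨div_pos (by linarith) (by positivity), ?_⟩, ?_⟩
  · rw [div_lt_one (by positivity)]
    nlinarith
  · have hden : 1 - (q - p) / ((1 - p) * q) * q = (1 - q) / (1 - p) := by
      field_simp
      ring
    rw [hden, div_eq_iff (by apply div_ne_zero <;> linarith)]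
    field_simp
    ring

namespace UCA

variable (A : UCA) {a b c : ℝ}

lemma op_mem {p : ℝ} (hp : p ∈ Ioo (0:ℝ) 1) (ha : a ∈ Icc (0:ℝ) 1) (hb : b ∈ Icc (0:ℝ) 1) :
    A.op p a b ∈ Icc (0:ℝ) 1 :=
  A.mem p (Ioo_subset_Icc_self hp) a ha b hb

lemma op_op_self_right {s v : ℝ} (hs : s ∈ Ioo (0:ℝ) 1) (hv : v ∈ Ioo (0:ℝ) 1)
    (ha : a ∈ Icc (0:ℝ) 1) (hc : c ∈ Icc (0:ℝ) 1) :
    A.op v (A.op s a c) c = A.op (s * v) a c := by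
  rw [A.assoc s hs v hv a ha c hc c hc, A.idem _ (one_sub_mul_div_mem_Ioo hs hv) c hc]

lemma op_eq_op_of_le {p r : ℝ} (hp : p ∈ Ioo (0:ℝ) 1) (hr : r ∈ Ioc 0 p)
    (ha : a ∈ Icc (0:ℝ) 1) (hb : b ∈ Icc (0:ℝ) 1) (hc : c ∈ Icc (0:ℝ) 1)
    (h : A.op p a c = A.op p b c) : A.op r a c = A.op r b c := by
  rcases hr.2.eq_or_lt with rfl | hrp
  · exact h
  have hv : r / p ∈ Ioo (0:ℝ) 1 := ⟨div_pos hr.1 hp.1, (div_lt_one hp.1).2 hrp⟩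
  have hr_eq : r = p * (r / p) := (mul_div_cancel₀ r hp.1.ne').symm
  rw [hr_eq, ← A.op_op_self_right hp hv ha hc, h, A.op_op_self_right hp hv hb hc]

lemma op_op_eq_op_of_op_eq {s q : ℝ} (hs : s ∈ Ioo (0:ℝ) 1) (hq : q ∈ Ioo (0:ℝ) 1)
    (ha : a ∈ Icc (0:ℝ) 1) (hb : b ∈ Icc (0:ℝ) 1) (hc : c ∈ Icc (0:ℝ) 1)
    (h : A.op ((1 - s) * q / (1 - s * q)) a c = A.op ((1 - s) * q / (1 - s * q)) b c) :
    A.op q (A.op s a b) c = A.op q a c := by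
  rw [A.assoc s hs q hq a ha b hb c hc, ← h, ← A.assoc s hs q hq a ha a ha c hc,
    A.idem s hs a ha]

variable {A}

lemma MO.op_mono_right (hMO : A.MO) {p b' : ℝ} (hp : p ∈ Ioo (0:ℝ) 1)
    (ha : a ∈ Icc (0:ℝ) 1) (hb : b ∈ Icc (0:ℝ) 1) (hb' : b' ∈ Icc (0:ℝ) 1) (hbb' : b ≤ b') :
    A.op p a b ≤ A.op p a b' := by
  have h1p : 1 - p ∈ Ioo (0:ℝ) 1 := ⟨by linarith [hp.2], by linarith [hp.1]⟩
  rw [A.comm p hp a ha b hb, A.comm p hp a ha b' hb']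
  exact hMO b hb b' hb' a ha (1 - p) h1p hbb'

lemma MO.le_op (hMO : A.MO) {t : ℝ} (ht : t ∈ Ioo (0:ℝ) 1) (ha : a ∈ Icc (0:ℝ) 1)
    (hb : b ∈ Icc (0:ℝ) 1) (hab : a ≤ b) : a ≤ A.op t b a :=
  (A.idem t ht a ha).symm.trans_le (hMO a ha b hb a ha t ht hab)

lemma MO.op_le (hMO : A.MO) {q : ℝ} (hq : q ∈ Ioo (0:ℝ) 1) (ha : a ∈ Icc (0:ℝ) 1)
    (hc : c ∈ Icc (0:ℝ) 1) (hca : c ≤ a) : A.op q a c ≤ a :=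
  (hMO.op_mono_right hq ha hc ha hca).trans_eq (A.idem q hq a ha)

lemma MO.monotoneOn_op (hMO : A.MO) (ha : a ∈ Icc (0:ℝ) 1) (hb : b ∈ Icc (0:ℝ) 1)
    (hab : a ≤ b) : MonotoneOn (fun t => A.op t b a) (Ioo 0 1) := by
  intro σ hσ s hs hσs
  rcases hσs.eq_or_lt with rfl | hlt
  · exact le_rfl
  have hv : σ / s ∈ Ioo (0:ℝ) 1 := ⟨div_pos hσ.1 hs.1, (div_lt_one hs.1).2 hlt⟩
  have hσ_eq : σ = s * (σ / s) := (mul_div_cancel₀ σ hs.1.ne').symm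
  have hw := A.op_mem hs hb ha
  calc A.op σ b a = A.op (σ / s) (A.op s b a) a := by rw [A.op_op_self_right hs hv hb ha, ← hσ_eq]
    _ ≤ A.op (σ / s) (A.op s b a) (A.op s b a) :=
      hMO.op_mono_right hv hw ha hw (hMO.le_op hs ha hb hab)
    _ = A.op s b a := A.idem _ hv _ hw

lemma LC.le_of_eventually_op_le (hLC : A.LC) (ha : a ∈ Icc (0:ℝ) 1) (hc : c ∈ Icc (0:ℝ) 1)
    (hca : c ≤ a) (h : ∀ᶠ q in 𝓝[<] (1:ℝ), A.op q a c ≤ b) : a ≤ b := by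
  refine (hLC c hc a ha hca).trans (liminf_le_of_frequently_le h.frequently ?_)
  refine isBoundedUnder_of_eventually_ge (a := 0) ?_
  filter_upwards [Ioo_mem_nhdsLT zero_lt_one] with q hq
  exact (A.op_mem hq ha hc).1

lemma le_of_op_eq_of_le (hMO : A.MO) (hLC : A.LC) {x y z p : ℝ}
    (hx : x ∈ Icc (0:ℝ) 1) (hy : y ∈ Icc (0:ℝ) 1) (hz : z ∈ Icc (0:ℝ) 1)
    (hp : p ∈ Ioo (0:ℝ) 1) (h : A.op p x z = A.op p y z) (hzx : z ≤ x) (hxy : x ≤ y) :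
    y ≤ x := by
  set w : ℝ → ℝ := fun t => A.op t y x
  have hw_mem : ∀ t ∈ Ioo (0:ℝ) 1, w t ∈ Icc (0:ℝ) 1 := fun t ht => A.op_mem ht hy hx
  have hx_le_w : ∀ t ∈ Ioo (0:ℝ) 1, x ≤ w t := fun t ht => hMO.le_op ht hx hy hxy
  have hwp : ∀ t ∈ Ioo (0:ℝ) 1, A.op p (w t) z = A.op p x z := by
    intro t ht
    have hr := one_sub_mul_div_mem_Ioo ht hp
    have hrp : (1 - t) * p / (1 - t * p) ≤ p := by
      rw [div_le_iff₀ (by nlinarith [ht.2, hp.2, hp.1])]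
      nlinarith [mul_pos (mul_pos ht.1 hp.1) (sub_pos.2 hp.2)]
    rw [A.op_op_eq_op_of_op_eq ht hp hy hx hz
      (A.op_eq_op_of_le hp ⟨hr.1, hrp⟩ hy hx hz h.symm), h]
  have hwq : ∀ q ∈ Ioo p 1, ∀ t ∈ Ioo (0:ℝ) 1, A.op q (w t) z ≤ x := by
    intro q hq t ht
    have hq' : q ∈ Ioo (0:ℝ) 1 := ⟨hp.1.trans hq.1, hq.2⟩
    obtain ⟨κ, hκ, hκq⟩ := exists_one_sub_mul_div_eq hp.1 hq.1 hq.2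
    have hinv : ∀ s ∈ Ioo (0:ℝ) 1, A.op q (w (s * κ)) z = A.op q (w s) z := fun s hs => by
      show A.op q (A.op (s * κ) y x) z = A.op q (A.op s y x) z
      rw [← A.op_op_self_right hs hκ hy hx,
        A.op_op_eq_op_of_op_eq hκ hq' (hw_mem s hs) hx hz (hκq ▸ hwp s hs)]
    have hxq : A.op q x z = A.op q (w (1 - κ)) z := by
      show A.op q x z = A.op q (A.op (1 - κ) y x) z
      rw [← A.comm κ hκ x hx y hy, A.op_op_eq_op_of_op_eq hκ hq' hx hy hz (hκq ▸ h)]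
    have hmono : MonotoneOn (fun s => A.op q (w s) z) (Ioo 0 1) :=
      fun s hs s' hs' hss' => hMO _ (hw_mem s hs) _ (hw_mem s' hs') z hz q hq'
        (hMO.monotoneOn_op hx hy hxy hs hs' hss')
    have h1κ : 1 - κ ∈ Ioo (0:ℝ) 1 := ⟨by linarith [hκ.2], by linarith [hκ.1]⟩
    calc A.op q (w t) z ≤ A.op q (w (1 - κ)) z := hmono.le_of_mul_invariant hκ hinv h1κ ht
      _ = A.op q x z := hxq.symm
      _ ≤ x := hMO.op_le hq' hx hz hzx
  have hw_le : ∀ t ∈ Ioo (0:ℝ) 1, w t ≤ x := fun t ht =>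
    hLC.le_of_eventually_op_le (hw_mem t ht) hz (hzx.trans (hx_le_w t ht))
      (eventually_of_mem (Ioo_mem_nhdsLT hp.2) fun q hq => hwq q hq t ht)
  exact hLC.le_of_eventually_op_le hy hx hxy
    (eventually_of_mem (Ioo_mem_nhdsLT zero_lt_one) hw_le)

end UCA

/-- Lemma 2.16: for a convex algebra on `[0,1]` satisfying (MO) and (LC), a one-sided
cancellation law holds: if `x ⊕_p z = y ⊕_p z`, `z ≤ x` and `z ≤ y`, then `x = y`. -/
theorem stmt_6 (A : UCA) (hMO : A.MO) (hLC : A.LC) :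
    ∀ x ∈ Set.Icc (0:ℝ) 1, ∀ y ∈ Set.Icc (0:ℝ) 1, ∀ z ∈ Set.Icc (0:ℝ) 1,
      ∀ p ∈ Set.Ioo (0:ℝ) 1,
        A.op p x z = A.op p y z → z ≤ x → z ≤ y → x = y := by
  intro x hx y hy z hz p hp h hzx hzy
  rcases le_total x y with hxy | hyx
  · exact le_antisymm hxy (A.le_of_op_eq_of_le hMO hLC hx hy hz hp h hzx hxy)
  · exact le_antisymm (A.le_of_op_eq_of_le hMO hLC hy hx hz hp h.symm hzy hyx) hyx
end

section
/- Let ⟨[0,1], ⊕_p⟩ be a convex algebra satisfying (MO) and (UC). Then for all x, y ∈ [0,1] with x ≤ y, the element V_{x,y} eats x, i.e. V_{x,y} ⊕_t x = V_{x,y} for all t ∈ (0,1]. -/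
open Set Filter Topology

/-- Monotonicity in the second argument, from (MO) and commutativity. -/
lemma UCA.mono2 (A : UCA) (hMO : A.MO) {a b b' q : ℝ} (ha : a ∈ Set.Icc (0:ℝ) 1)
    (hb : b ∈ Set.Icc (0:ℝ) 1) (hb' : b' ∈ Set.Icc (0:ℝ) 1) (hq : q ∈ Set.Ioo (0:ℝ) 1)
    (h : b ≤ b') : A.op q a b ≤ A.op q a b' := by
  rw [A.comm q hq a ha b hb, A.comm q hq a ha b' hb']
  exact hMO b hb b' hb' a ha (1 - q) ⟨by linarith [hq.2], by linarith [hq.1]⟩ h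

/-- Absorption: `(y ⊕_p x) ⊕_q x = y ⊕_{pq} x`. -/
lemma UCA.absorb (A : UCA) {p q x y : ℝ} (hp : p ∈ Set.Ioo (0:ℝ) 1)
    (hq : q ∈ Set.Ioo (0:ℝ) 1) (hx : x ∈ Set.Icc (0:ℝ) 1) (hy : y ∈ Set.Icc (0:ℝ) 1) :
    A.op q (A.op p y x) x = A.op (p * q) y x := by
  have h1 : p * q < 1 := by nlinarith [hp.1, hp.2, hq.1, hq.2]
  have hr : (1 - p) * q / (1 - p * q) ∈ Set.Ioo (0:ℝ) 1 := by
    constructor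
    · exact div_pos (mul_pos (by linarith [hp.2]) hq.1) (by linarith)
    · rw [div_lt_one (by linarith)]; nlinarith [hp.1, hq.2]
  rw [A.assoc p hp q hq y hy x hx x hx, A.idem _ hr x hx]

/-- Proposition 3.2(i): for a convex algebra on `[0,1]` satisfying (MO) and (UC),
for all `x ≤ y` in `[0,1]`, the element `V_{x,y}` eats `x`. -/
theorem stmt_7 (A : UCA) (hMO : A.MO) (hUC : A.UC) :
    ∀ x ∈ Set.Icc (0:ℝ) 1, ∀ y ∈ Set.Icc (0:ℝ) 1, x ≤ y → A.Eats (A.V x y) x := by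
  intro x hx y hy hxy
  set s : ℝ → ℝ := fun p => A.op p y x with hs
  -- basic facts about s
  have hsmem : ∀ p ∈ Set.Icc (0:ℝ) 1, s p ∈ Set.Icc (0:ℝ) 1 := fun p hp => A.mem p hp y hy x hx
  have hs1 : s 1 = y := A.proj1 y hy x hx
  have hxs : ∀ p ∈ Set.Ioc (0:ℝ) 1, x ≤ s p := by
    intro p hp
    rcases eq_or_lt_of_le hp.2 with h | h
    · rw [h, hs1]; exact hxy
    · have hp' : p ∈ Set.Ioo (0:ℝ) 1 := ⟨hp.1, h⟩
      calc x = A.op p x x := (A.idem p hp' x hx).symm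
        _ ≤ s p := hMO x hx y hy x hx p hp' hxy
  have hsle : ∀ p ∈ Set.Ioo (0:ℝ) 1, ∀ a ∈ Set.Icc (0:ℝ) 1, x ≤ a → A.op p a x ≤ a := by
    intro p hp a ha hxa
    calc A.op p a x ≤ A.op p a a := A.mono2 hMO ha hx ha hp hxa
      _ = a := A.idem p hp a ha
  -- monotonicity of s on (0,1]
  have hsmono : ∀ p ∈ Set.Ioc (0:ℝ) 1, ∀ p' ∈ Set.Ioc (0:ℝ) 1, p ≤ p' → s p ≤ s p' := by
    intro p hp p' hp' hpp'
    rcases eq_or_lt_of_le hpp' with h | h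
    · rw [h]
    rcases eq_or_lt_of_le hp'.2 with h1 | h1
    · -- p' = 1 : show s p ≤ y
      subst h1; rw [hs1]
      have hpo : p ∈ Set.Ioo (0:ℝ) 1 := ⟨hp.1, h⟩
      calc s p ≤ A.op p y y := A.mono2 hMO hy hx hy hpo hxy
        _ = y := A.idem p hpo y hy
    · -- p' < 1 : s p = s p' ⊕_{p/p'} x ≤ s p'
      have hp'o : p' ∈ Set.Ioo (0:ℝ) 1 := ⟨hp'.1, h1⟩
      have hqo : p / p' ∈ Set.Ioo (0:ℝ) 1 :=
        ⟨div_pos hp.1 hp'.1, (div_lt_one hp'.1).2 h⟩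
      have key : A.op (p / p') (s p') x = s p := by
        rw [hs]; simp only
        rw [A.absorb hp'o hqo hx hy, mul_div_cancel₀ p (ne_of_gt hp'.1)]
      rw [← key]
      exact hsle _ hqo _ (hsmem p' (Set.mem_Icc_of_Ioo hp'o)) (hxs p' hp')
  -- the set S
  set S : Set ℝ := (fun p => A.op p y x) '' Set.Ioc (0:ℝ) 1 with hS
  have hSne : S.Nonempty := ⟨y, 1, Set.right_mem_Ioc.2 one_pos, hs1⟩
  have hSbdd : BddBelow S := by
    refine ⟨0, ?_⟩
    rintro _ ⟨p, hp, rfl⟩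
    exact (hsmem p (Set.mem_Icc_of_Ioc hp)).1
  have hVdef : A.V x y = sInf S := rfl
  have hVle : ∀ p ∈ Set.Ioc (0:ℝ) 1, A.V x y ≤ s p := by
    intro p hp; exact csInf_le hSbdd ⟨p, hp, rfl⟩
  have hxV : x ≤ A.V x y := by
    rw [hVdef]; exact le_csInf hSne (by rintro _ ⟨p, hp, rfl⟩; exact hxs p hp)
  have hVy : A.V x y ≤ y := by
    have h := hVle 1 (Set.right_mem_Ioc.2 one_pos); rwa [hs1] at h
  have hV01 : A.V x y ∈ Set.Icc (0:ℝ) 1 := ⟨le_trans hx.1 hxV, le_trans hVy hy.2⟩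
  -- main goal
  intro t ht
  rcases eq_or_lt_of_le ht.2 with h1 | h1
  · rw [h1]; exact A.proj1 _ hV01 x hx
  have hto : t ∈ Set.Ioo (0:ℝ) 1 := ⟨ht.1, h1⟩
  -- upper bound : V ⊕_t x ≤ V
  have hub : A.op t (A.V x y) x ≤ A.V x y := by
    rw [hVdef]
    apply le_csInf hSne
    rintro _ ⟨p, hp, rfl⟩
    have step1 : A.op t (A.V x y) x ≤ A.op t (s p) x :=
      hMO _ hV01 _ (hsmem p (Set.mem_Icc_of_Ioc hp)) x hx t hto (hVle p hp)
    refine le_trans step1 ?_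
    exact hsle t hto (s p) (hsmem p (Set.mem_Icc_of_Ioc hp)) (hxs p hp)
  -- lower bound
  have hlb : A.V x y ≤ A.op t (A.V x y) x := by
    rcases eq_or_lt_of_le hV01.2 with hV1 | hV1
    · -- V = 1, then y = 1 and s t = 1
      have hy1 : y = 1 := le_antisymm hy.2 (hV1 ▸ hVy)
      have hst : s t = 1 := le_antisymm (hsmem t (Set.mem_Icc_of_Ioo hto)).2
        (by rw [← hV1]; exact hVle t (Set.mem_Ioc_of_Ioo hto))
      have heq : A.op t (A.V x y) x = s t := by
        rw [hs]; simp only; rw [hV1, hy1]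
      rw [heq, hst, hV1]
    · -- V < 1 : use (UC)
      have hxlt : x < 1 := lt_of_le_of_lt hxV hV1
      have hUC' := hUC (A.V x y) ⟨hV01.1, hV1⟩ x ⟨hx.1, hxlt⟩ t hto
      refine le_trans ?_ hUC'
      set f : ℝ → ℝ := fun ε => A.op t (A.V x y + ε) (x + ε) with hf
      set δ : ℝ := min (1 - A.V x y) (1 - x) with hδ
      have hδpos : 0 < δ := lt_min (by linarith) (by linarith)
      have hev : ∀ᶠ ε in 𝓝[>] (0:ℝ), ε ∈ Set.Ioo 0 δ :=
        Ioo_mem_nhdsGT_of_mem ⟨le_refl 0, hδpos⟩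
      have hmem' : ∀ ε ∈ Set.Ioo (0:ℝ) δ, (A.V x y + ε) ∈ Set.Icc (0:ℝ) 1 ∧
          (x + ε) ∈ Set.Icc (0:ℝ) 1 := by
        intro ε hε
        have h1 := lt_of_lt_of_le hε.2 (min_le_left _ _)
        have h2 := lt_of_lt_of_le hε.2 (min_le_right _ _)
        exact ⟨⟨by linarith [hV01.1, hε.1], by linarith⟩, ⟨by linarith [hx.1, hε.1], by linarith⟩⟩
      have hbdd : Filter.IsBoundedUnder (· ≤ ·) (𝓝[>] (0:ℝ)) f := by
        refine ⟨1, hev.mono fun ε hε => ?_⟩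
        obtain ⟨hV', hx'⟩ := hmem' ε hε
        exact (A.mem t (Set.mem_Icc_of_Ioo hto) _ hV' _ hx').2
      have hge : ∀ ε ∈ Set.Ioo (0:ℝ) δ, A.V x y ≤ f ε := by
        intro ε hε
        obtain ⟨hV', hx'⟩ := hmem' ε hε
        -- choose p ∈ (0,1) with s p ≤ V + ε
        obtain ⟨a, ⟨p, hp, rfl⟩, hap⟩ :=
          exists_lt_of_csInf_lt hSne (show sInf S < A.V x y + ε by
            rw [← hVdef]; linarith [hε.1])
        set p' : ℝ := min p (1/2) with hp'
        have hp'o : p' ∈ Set.Ioo (0:ℝ) 1 :=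
          ⟨lt_min hp.1 (by norm_num), lt_of_le_of_lt (min_le_right _ _) (by norm_num)⟩
        have hsp' : s p' ≤ A.V x y + ε :=
          le_trans (hsmono p' (Set.mem_Ioc_of_Ioo hp'o) p hp (min_le_left _ _)) (le_of_lt hap)
        have hpt : p' * t ∈ Set.Ioc (0:ℝ) 1 :=
          ⟨mul_pos hp'o.1 hto.1, le_of_lt (by nlinarith [hp'o.2, hto.2, hto.1])⟩
        calc A.V x y ≤ s (p' * t) := hVle _ hpt
          _ = A.op t (s p') x := (A.absorb hp'o hto hx hy).symm
          _ ≤ A.op t (A.V x y + ε) x :=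
            hMO _ (hsmem p' (Set.mem_Icc_of_Ioo hp'o)) _ hV' x hx t hto hsp'
          _ ≤ f ε := A.mono2 hMO hV' hx hx' hto (by linarith [hε.1])
      exact Filter.le_limsup_of_frequently_le
        ((hev.mono fun ε hε => hge ε hε).frequently) hbdd
  exact le_antisymm hub hlb
end

section
/- Let ⟨[0,1], ⊕_p⟩ be a convex algebra satisfying (MO) and (LC). Then: (1) for all x, y ∈ [0,1], y eats x if and only if x ≤ y and the map Γ_{x,y}(t) = y ⊕_t x is not injective; (2) for every y ∈ (0,1], the following are equivalent: there exists x ∈ [0,1] with x ≠ y such that y eats x; y eats 0; y eats every x ∈ [0,1] with x ≤ y. -/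
open Set Filter Topology

namespace UCAaux

variable (A : UCA)

/-- monotone in the second argument -/
lemma monoR (hMO : A.MO) {x y y' p : ℝ} (hx : x ∈ Set.Icc (0:ℝ) 1)
    (hy : y ∈ Set.Icc (0:ℝ) 1) (hy' : y' ∈ Set.Icc (0:ℝ) 1)
    (hp : p ∈ Set.Ioo (0:ℝ) 1) (h : y ≤ y') : A.op p x y ≤ A.op p x y' := by
  rw [A.comm p hp x hx y hy, A.comm p hp x hx y' hy']
  exact hMO y hy y' hy' x hx (1-p) ⟨by linarith [hp.2], by linarith [hp.1]⟩ h

/-- bounds for `Γ p = y ⊕_p x` when `x ≤ y` -/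
lemma gamma_bounds (hMO : A.MO) {x y p : ℝ} (hx : x ∈ Set.Icc (0:ℝ) 1)
    (hy : y ∈ Set.Icc (0:ℝ) 1) (hxy : x ≤ y) (hp : p ∈ Set.Icc (0:ℝ) 1) :
    x ≤ A.op p y x ∧ A.op p y x ≤ y := by
  rcases eq_or_lt_of_le hp.1 with h0 | h0
  · rw [← h0, A.proj0 y hy x hx]; exact ⟨le_refl x, hxy⟩
  rcases eq_or_lt_of_le hp.2 with h1 | h1
  · rw [h1, A.proj1 y hy x hx]; exact ⟨hxy, le_refl y⟩
  have hpo : p ∈ Set.Ioo (0:ℝ) 1 := ⟨h0, h1⟩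
  constructor
  · have := hMO x hx y hy x hx p hpo hxy
    rwa [A.idem p hpo x hx] at this
  · have := monoR A hMO hy hx hy hpo hxy
    rwa [A.idem p hpo y hy] at this

/-- `Γ (p*q) = (Γ p) ⊕_q x` -/
lemma gamma_mul (hx : x ∈ Set.Icc (0:ℝ) 1) (hy : y ∈ Set.Icc (0:ℝ) 1)
    {p q : ℝ} (hp : p ∈ Set.Ioo (0:ℝ) 1) (hq : q ∈ Set.Ioo (0:ℝ) 1) :
    A.op (p*q) y x = A.op q (A.op p y x) x := by
  have hpq1 : p * q < 1 := by nlinarith [hp.1, hp.2, hq.1, hq.2]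
  have hr : (1-p)*q/(1-p*q) ∈ Set.Ioo (0:ℝ) 1 := by
    constructor
    · exact div_pos (mul_pos (by linarith [hp.2]) hq.1) (by linarith)
    · rw [div_lt_one (by linarith)]
      nlinarith [hp.1, hq.2]
  have h := A.assoc p hp q hq y hy x hx x hx
  rw [A.idem _ hr x hx] at h
  exact h.symm

/-- `Γ` is monotone nondecreasing on `[0,1]` when `x ≤ y` -/
lemma gamma_mono (hMO : A.MO) {x y a b : ℝ} (hx : x ∈ Set.Icc (0:ℝ) 1)
    (hy : y ∈ Set.Icc (0:ℝ) 1) (hxy : x ≤ y) (ha : a ∈ Set.Icc (0:ℝ) 1)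
    (hb : b ∈ Set.Icc (0:ℝ) 1) (hab : a ≤ b) :
    A.op a y x ≤ A.op b y x := by
  rcases eq_or_lt_of_le hab with rfl | hab
  · exact le_refl _
  rcases eq_or_lt_of_le ha.1 with h0 | h0
  · rw [← h0, A.proj0 y hy x hx]
    exact (gamma_bounds A hMO hx hy hxy hb).1
  rcases eq_or_lt_of_le hb.2 with h1 | h1
  · rw [h1, A.proj1 y hy x hx]
    exact (gamma_bounds A hMO hx hy hxy ha).2
  have hbo : b ∈ Set.Ioo (0:ℝ) 1 := ⟨lt_trans h0 hab, h1⟩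
  have hq : a/b ∈ Set.Ioo (0:ℝ) 1 := ⟨div_pos h0 hbo.1, (div_lt_one hbo.1).2 hab⟩
  have hab' : b * (a/b) = a := by
    rw [← mul_div_assoc, mul_div_cancel_left₀ _ (ne_of_gt hbo.1)]
  set z := A.op b y x with hz
  have hzm : z ∈ Set.Icc (0:ℝ) 1 := A.mem b (Set.mem_Icc_of_Ioo hbo) y hy x hx
  have hxz : x ≤ z := (gamma_bounds A hMO hx hy hxy hb).1
  have hgm := gamma_mul A hx hy hbo hq
  rw [hab'] at hgm
  calc A.op a y x = A.op (a/b) z x := hgm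
    _ ≤ A.op (a/b) z z := monoR A hMO hzm hx hzm hq hxz
    _ = z := A.idem _ hq z hzm

/-- liminf of a function that is constant on `(0,1)` -/
lemma liminf_const_on {f : ℝ → ℝ} {c : ℝ} (h : ∀ p ∈ Set.Ioo (0:ℝ) 1, f p = c) :
    Filter.liminf f (𝓝[<] (1:ℝ)) = c := by
  have hev : ∀ᶠ p in 𝓝[<](1:ℝ), f p = c := by
    filter_upwards [Ioo_mem_nhdsLT_of_mem (show (1:ℝ) ∈ Set.Ioc (0:ℝ) 1 by norm_num)]
      with p hp using h p hp
  rw [Filter.liminf_congr hev, Filter.liminf_const]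

/-- eats implies `x ≤ y` -/
lemma eats_le (hLC : A.LC) {x y : ℝ} (hx : x ∈ Set.Icc (0:ℝ) 1)
    (hy : y ∈ Set.Icc (0:ℝ) 1) (he : A.Eats y x) : x ≤ y := by
  rcases le_total x y with h | h
  · exact h
  have h1 := hLC y hy x hx h
  have h2 : Filter.liminf (fun p => A.op p x y) (𝓝[<] (1:ℝ)) = y := by
    apply liminf_const_on
    intro p hp
    rw [A.comm p hp x hx y hy]
    exact he (1-p) ⟨by linarith [hp.2], by linarith [hp.1]⟩
  rw [h2] at h1
  linarith

/-- eats when x = y -/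
lemma eats_self {y : ℝ} (hy : y ∈ Set.Icc (0:ℝ) 1) : A.Eats y y := by
  intro t ht
  rcases eq_or_lt_of_le ht.2 with h1 | h1
  · rw [h1]; exact A.proj1 y hy y hy
  · exact A.idem t ⟨ht.1, h1⟩ y hy

end UCAaux

namespace UCAaux

variable (A : UCA)

/-- shifting identity: `Γ (s₀ + u(1-s₀)) = y ⊕_{s₀} (Γ u)` -/
lemma gamma_shift {x y : ℝ} (hx : x ∈ Set.Icc (0:ℝ) 1) (hy : y ∈ Set.Icc (0:ℝ) 1)
    {s₀ u : ℝ} (hs₀ : s₀ ∈ Set.Ioo (0:ℝ) 1) (hu : u ∈ Set.Ioo (0:ℝ) 1) :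
    A.op (s₀ + u*(1-s₀)) y x = A.op s₀ y (A.op u y x) := by
  obtain ⟨hs1, hs2⟩ := hs₀
  obtain ⟨hu1, hu2⟩ := hu
  set q₀ : ℝ := s₀ + u*(1-s₀) with hq₀def
  have hq₀ : q₀ ∈ Set.Ioo (0:ℝ) 1 := ⟨by nlinarith, by nlinarith⟩
  have hq₀ne : q₀ ≠ 0 := ne_of_gt hq₀.1
  have hp₀ : s₀/q₀ ∈ Set.Ioo (0:ℝ) 1 :=
    ⟨div_pos hs1 hq₀.1, (div_lt_one hq₀.1).2 (by nlinarith)⟩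
  have h1 : s₀/q₀ * q₀ = s₀ := div_mul_cancel₀ _ hq₀ne
  have h2 : (1 - s₀/q₀) * q₀ / (1 - s₀/q₀ * q₀) = u := by
    rw [h1, sub_mul, div_mul_cancel₀ _ hq₀ne, one_mul]
    rw [div_eq_iff (by linarith : (1:ℝ) - s₀ ≠ 0)]
    rw [hq₀def]; ring
  have h := A.assoc (s₀/q₀) hp₀ q₀ hq₀ y hy y hy x hx
  rw [A.idem _ hp₀ y hy, h2, h1] at h
  exact h

/-- auxiliary chain sequence -/
noncomputable def sig (t : ℝ) : ℕ → ℝ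
  | 0 => t/4
  | n+1 => sig t n + (t/2)*(1 - sig t n)

set_option maxHeartbeats 2000000 in
/-- Main flatness lemma: if `x ≤ y` and `Γ` takes the same value at two points
of `[0,1]`, then `y ⊳ x`. -/
lemma eats_of_flat (hMO : A.MO) (hLC : A.LC) {x y : ℝ}
    (hx : x ∈ Set.Icc (0:ℝ) 1) (hy : y ∈ Set.Icc (0:ℝ) 1) (hxy : x ≤ y)
    {s t : ℝ} (hs : s ∈ Set.Icc (0:ℝ) 1) (ht : t ∈ Set.Icc (0:ℝ) 1)
    (hst : s < t) (heq : A.op s y x = A.op t y x) : A.Eats y x := by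
  rcases eq_or_lt_of_le hxy with rfl | hxy
  · exact eats_self A hx
  -- Step 0: normalize to 0 < s' < t' < 1
  obtain ⟨s', t', hs'0, hs't', ht'1, heq'⟩ :
      ∃ s' t' : ℝ, 0 < s' ∧ s' < t' ∧ t' < 1 ∧ A.op s' y x = A.op t' y x := by
    rcases eq_or_lt_of_le ht.2 with h1 | h1
    · -- t = 1 : Γ s = y
      subst h1
      rw [A.proj1 y hy x hx] at heq
      have hs0 : 0 < s := by
        rcases eq_or_lt_of_le hs.1 with h0 | h0
        · exfalso; rw [← h0, A.proj0 y hy x hx] at heq; linarith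
        · exact h0
      refine ⟨s, (s+1)/2, hs0, by linarith, by linarith, ?_⟩
      have hm : (s+1)/2 ∈ Set.Icc (0:ℝ) 1 := ⟨by linarith [hs.1], by linarith⟩
      have hl := gamma_mono A hMO hx hy hxy.le hs hm (by linarith)
      have hr : A.op ((s+1)/2) y x ≤ A.op 1 y x :=
        gamma_mono A hMO hx hy hxy.le hm ⟨by norm_num, le_refl 1⟩ (by linarith)
      rw [A.proj1 y hy x hx] at hr
      rw [heq] at hl
      rw [heq]
      linarith
    · rcases eq_or_lt_of_le hs.1 with h0 | h0
      · -- s = 0 : Γ t = x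
        rw [← h0, A.proj0 y hy x hx] at heq
        refine ⟨t/2, t, by linarith, by linarith, h1, ?_⟩
        have hm : t/2 ∈ Set.Icc (0:ℝ) 1 := ⟨by linarith [ht.1, hst], by linarith [ht.2]⟩
        have hl := (gamma_bounds A hMO hx hy hxy.le hm).1
        have hr := gamma_mono A hMO hx hy hxy.le hm ht (by linarith)
        rw [← heq] at hr ⊢
        linarith
      · exact ⟨s, t, h0, hst, h1, heq⟩
  clear heq hst hs ht s t
  have hs'm : s' ∈ Set.Ioo (0:ℝ) 1 := ⟨hs'0, lt_trans hs't' ht'1⟩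
  have ht'm : t' ∈ Set.Ioo (0:ℝ) 1 := ⟨lt_trans hs'0 hs't', ht'1⟩
  set v : ℝ := A.op t' y x with hv
  -- Step A: Γ is constant = v on (0, t']
  have hkey : ∀ q ∈ Set.Ioo (0:ℝ) 1, A.op (s'*q) y x = A.op (t'*q) y x := by
    intro q hq
    rw [gamma_mul A hx hy hs'm hq, gamma_mul A hx hy ht'm hq, heq']
  set r : ℝ := s'/t' with hr
  have hrm : r ∈ Set.Ioo (0:ℝ) 1 := ⟨div_pos hs'0 ht'm.1, (div_lt_one ht'm.1).2 hs't'⟩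
  have hsr : s' = t' * r := by rw [hr, ← mul_div_assoc, mul_div_cancel_left₀ _ (ne_of_gt ht'm.1)]
  have hpow : ∀ n : ℕ, A.op (t' * r^n) y x = v := by
    intro n
    induction n with
    | zero => simp [hv]
    | succ n ih =>
      have h1 : t' * r^(n+1) = s' * r^n := by rw [hsr]; ring
      rcases Nat.eq_zero_or_pos n with rfl | hn
      · rw [h1]; simpa [hsr] using heq'.trans (by rw [hv])
      · have hrn : r^n ∈ Set.Ioo (0:ℝ) 1 :=
          ⟨pow_pos hrm.1 n, pow_lt_one₀ hrm.1.le hrm.2 hn.ne'⟩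
        rw [h1, hkey (r^n) hrn]
        exact ih
  have hflat : ∀ u ∈ Set.Ioc (0:ℝ) t', A.op u y x = v := by
    intro u hu
    have hex : ∃ n : ℕ, t' * r^n < u := by
      obtain ⟨n, hn⟩ := exists_pow_lt_of_lt_one (div_pos hu.1 ht'm.1) hrm.2
      exact ⟨n, by rw [← lt_div_iff₀' ht'm.1] ; exact hn⟩
    classical
    have hN1 : t' * r^(Nat.find hex) < u := Nat.find_spec hex
    have hNpos : Nat.find hex ≠ 0 := by
      intro h0
      rw [h0] at hN1
      simp at hN1
      linarith [hu.2]
    obtain ⟨m, hm⟩ := Nat.exists_eq_succ_of_ne_zero hNpos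
    rw [hm] at hN1
    have hN2 : ¬ (t' * r^m < u) := Nat.find_min hex (by omega)
    push_neg at hN2
    have hmem1 : t' * r^(m+1) ∈ Set.Icc (0:ℝ) 1 :=
      ⟨le_of_lt (mul_pos ht'm.1 (pow_pos hrm.1 _)), le_trans (by nlinarith [pow_pos hrm.1 (m+1), pow_le_one₀ hrm.1.le hrm.2.le (n := m+1)]) ht'm.2.le⟩
    have hmem2 : t' * r^m ∈ Set.Icc (0:ℝ) 1 :=
      ⟨le_of_lt (mul_pos ht'm.1 (pow_pos hrm.1 _)), le_trans (by nlinarith [pow_pos hrm.1 m, pow_le_one₀ hrm.1.le hrm.2.le (n := m)]) ht'm.2.le⟩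
    have hum : u ∈ Set.Icc (0:ℝ) 1 := ⟨hu.1.le, le_trans hu.2 ht'm.2.le⟩
    have h1 := gamma_mono A hMO hx hy hxy.le hmem1 hum hN1.le
    have h2 := gamma_mono A hMO hx hy hxy.le hum hmem2 hN2
    rw [hpow (m+1)] at h1
    rw [hpow m] at h2
    linarith
  -- Step C: for any s₀ ∈ (0,1), Γ is constant on (s₀, s₀ + t'(1-s₀)]
  have hC : ∀ s₀ ∈ Set.Ioo (0:ℝ) 1, ∀ a : ℝ, s₀ < a → a ≤ s₀ + t'*(1-s₀) →
      A.op a y x = A.op s₀ y v := by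
    intro s₀ hs₀ a ha1 ha2
    set u : ℝ := (a - s₀)/(1 - s₀) with hu
    have h1s : (0:ℝ) < 1 - s₀ := by linarith [hs₀.2]
    have hu1 : 0 < u := div_pos (by linarith) h1s
    have hut : u ≤ t' := by rw [hu, div_le_iff₀ h1s]; linarith
    have huo : u ∈ Set.Ioo (0:ℝ) 1 := ⟨hu1, lt_of_le_of_lt hut ht'1⟩
    have hau : a = s₀ + u*(1-s₀) := by rw [hu, div_mul_cancel₀ _ (ne_of_gt h1s)]; ring
    rw [hau, gamma_shift A hx hy hs₀ huo, hflat u ⟨hu1, hut⟩]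
  -- Step D: chain to show Γ = v on all of (0,1)
  set σ : ℕ → ℝ := sig t' with hσ
  have hσ0 : σ 0 = t'/4 := rfl
  have hσs : ∀ n, σ (n+1) = σ n + (t'/2)*(1 - σ n) := fun n => rfl
  have hσmem : ∀ n, 0 < σ n ∧ σ n < 1 := by
    intro n; induction n with
    | zero => rw [hσ0]; constructor <;> nlinarith [ht'm.1, ht'1]
    | succ n ih =>
      rw [hσs]
      constructor
      · nlinarith [ht'm.1, ht'1, ih.1, ih.2]
      · nlinarith [ht'm.1, ht'1, ih.1, ih.2]
  have hσlt : ∀ n, σ n < σ (n+1) := by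
    intro n; rw [hσs]; nlinarith [ht'm.1, (hσmem n).2]
  have hσgeom : ∀ n, 1 - σ n = (1 - t'/2)^n * (1 - t'/4) := by
    intro n; induction n with
    | zero => rw [hσ0]; ring
    | succ n ih => rw [hσs, pow_succ]; nlinarith [ih]
  -- Γ(σ (n+1)) = v for all n
  have hσv : ∀ n, A.op (σ (n+1)) y x = v := by
    intro n; induction n with
    | zero =>
      apply hflat
      refine Set.mem_Ioc.mpr ⟨?_, ?_⟩
      · rw [hσs, hσ0]; nlinarith [ht'm.1, ht'1]
      · rw [hσs, hσ0]; nlinarith [ht'm.1, ht'1]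
    | succ n ih =>
      have hs₀ := hσmem n
      have e1 : A.op (σ (n+2)) y x = A.op (σ n) y v := by
        apply hC (σ n) ⟨hs₀.1, hs₀.2⟩
        · calc σ n < σ (n+1) := hσlt n
            _ < σ (n+2) := hσlt (n+1)
        · rw [hσs (n+1), hσs n]
          nlinarith [ht'm.1, ht'1, (hσmem n).2, mul_pos (mul_pos ht'm.1 ht'm.1) (sub_pos.mpr (hσmem n).2)]
      have e2 : A.op (σ (n+1)) y x = A.op (σ n) y v := by
        apply hC (σ n) ⟨hs₀.1, hs₀.2⟩
        · exact hσlt n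
        · rw [hσs n]; nlinarith [ht'm.1, (hσmem n).2]
      rw [e1, ← e2, ih]
  -- Γ a = v for all a ∈ (0,1)
  have hall : ∀ a ∈ Set.Ioo (0:ℝ) 1, A.op a y x = v := by
    intro a ha
    rcases le_or_gt a t' with h | h
    · exact hflat a ⟨ha.1, h⟩
    · have hex : ∃ n : ℕ, a ≤ σ n := by
        obtain ⟨n, hn⟩ := exists_pow_lt_of_lt_one
          (show (0:ℝ) < (1-a)/(1-t'/4) by
            apply div_pos (by linarith [ha.2]) (by nlinarith [ht'1, ht'm.1]))
          (show 1 - t'/2 < 1 by linarith [ht'm.1])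
        refine ⟨n, ?_⟩
        have := hσgeom n
        have hpos : (0:ℝ) < 1 - t'/4 := by nlinarith [ht'1, ht'm.1]
        rw [lt_div_iff₀ hpos] at hn
        nlinarith [this]
      classical
      have hN1 : a ≤ σ (Nat.find hex) := Nat.find_spec hex
      have hNpos : Nat.find hex ≠ 0 := by
        intro h0
        rw [h0, hσ0] at hN1
        nlinarith [ht'1, ht'm.1]
      obtain ⟨m, hm⟩ := Nat.exists_eq_succ_of_ne_zero hNpos
      rw [hm] at hN1
      have hN2 : ¬ (a ≤ σ m) := Nat.find_min hex (by omega)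
      push_neg at hN2
      have hsm := hσmem m
      have e1 : A.op a y x = A.op (σ m) y v := by
        apply hC (σ m) ⟨hsm.1, hsm.2⟩ a hN2
        have hNs : σ (m+1) = σ m + (t'/2)*(1-σ m) := hσs m
        nlinarith [hN1, hNs, ht'm.1, hsm.2, mul_pos ht'm.1 (sub_pos.mpr hsm.2)]
      have e2 : A.op (σ (m+1)) y x = A.op (σ m) y v := by
        apply hC (σ m) ⟨hsm.1, hsm.2⟩ _ (hσlt m)
        rw [hσs m]; nlinarith [ht'm.1, hsm.2]
      rw [e1, ← e2, hσv m]
  -- Step E: v = y via LC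
  have hvy : v = y := by
    have h1 := hLC x hx y hy hxy.le
    have h2 : Filter.liminf (fun p => A.op p y x) (𝓝[<] (1:ℝ)) = v :=
      liminf_const_on (fun p hp => hall p hp)
    rw [h2] at h1
    have h3 : v ≤ y := (gamma_bounds A hMO hx hy hxy.le (Set.mem_Icc_of_Ioo ht'm)).2
    linarith
  -- conclude
  intro t₀ ht₀
  rcases eq_or_lt_of_le ht₀.2 with h1 | h1
  · rw [h1]; exact A.proj1 y hy x hx
  · rw [hall t₀ ⟨ht₀.1, h1⟩, hvy]

end UCAaux

namespace UCAaux

variable (A : UCA)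

/-- If `y` eats some `x < y`, then `y` eats `0`. -/
lemma eats_zero_of_eats (hMO : A.MO) (hLC : A.LC) {x y : ℝ}
    (hx : x ∈ Set.Icc (0:ℝ) 1) (hy : y ∈ Set.Icc (0:ℝ) 1)
    (hxy : x < y) (he : A.Eats y x) : A.Eats y 0 := by
  have h0 : (0:ℝ) ∈ Set.Icc (0:ℝ) 1 := by norm_num
  have h0y : (0:ℝ) ≤ y := hy.1
  by_cases hinj : Set.InjOn (fun q => A.op q y 0) (Set.Icc (0:ℝ) 1)
  · exfalso
    have hstrict : ∀ {a b : ℝ}, a ∈ Set.Icc (0:ℝ) 1 → b ∈ Set.Icc (0:ℝ) 1 → a < b →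
        A.op a y 0 < A.op b y 0 := by
      intro a b ha hb hab
      rcases lt_or_eq_of_le (gamma_mono A hMO h0 hy h0y ha hb hab.le) with h | h
      · exact h
      · exact absurd (hinj ha hb h) (ne_of_lt hab)
    -- find r ∈ (0,1) with x ≤ y ⊕_r 0
    obtain ⟨r, hrm, hxr⟩ : ∃ r ∈ Set.Ioo (0:ℝ) 1, x ≤ A.op r y 0 := by
      have h1 := hLC 0 h0 y hy h0y
      have hbdd : Filter.IsBoundedUnder (· ≥ ·) (𝓝[<] (1:ℝ)) (fun p => A.op p y 0) := by
        refine ⟨0, ?_⟩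
        rw [Filter.eventually_map]
        filter_upwards [Ioo_mem_nhdsLT_of_mem
          (show (1:ℝ) ∈ Set.Ioc (0:ℝ) 1 by norm_num)] with p hp
        exact (A.mem p (Set.mem_Icc_of_Ioo hp) y hy 0 h0).1
      have h2 : ∀ᶠ p in 𝓝[<] (1:ℝ), x < A.op p y 0 :=
        Filter.eventually_lt_of_lt_liminf (lt_of_lt_of_le hxy h1) hbdd
      have h3 := h2.and (Filter.eventually_mem_set.mpr (Ioo_mem_nhdsLT_of_mem
        (show (1:ℝ) ∈ Set.Ioc (0:ℝ) 1 by norm_num)))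
      obtain ⟨r, h4, h5⟩ := h3.exists
      exact ⟨r, h5, h4.le⟩
    set w : ℝ := A.op r y 0 with hw
    have hwm : w ∈ Set.Icc (0:ℝ) 1 := A.mem r (Set.mem_Icc_of_Ioo hrm) y hy 0 h0
    -- identity: h((1+r)/2) = x ⊕_{1/2} w
    set q : ℝ := (1+r)/2 with hq
    have hqm : q ∈ Set.Ioo (0:ℝ) 1 := ⟨by rw [hq]; linarith [hrm.1], by rw [hq]; linarith [hrm.2]⟩
    have hp₀m : 1/(1+r) ∈ Set.Ioo (0:ℝ) 1 := by
      constructor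
      · exact div_pos one_pos (by linarith [hrm.1])
      · rw [div_lt_one (by linarith [hrm.1])]; linarith [hrm.1]
    have hr1 : (1:ℝ) + r ≠ 0 := ne_of_gt (by linarith [hrm.1])
    have hpq : 1/(1+r) * q = 1/2 := by rw [hq]; field_simp
    have hR : (1 - 1/(1+r)) * q / (1 - 1/(1+r) * q) = r := by
      rw [hpq, hq]; field_simp; ring
    have hxyop : A.op (1/(1+r)) x y = y := by
      rw [A.comm _ hp₀m x hx y hy]
      refine he _ ⟨?_, ?_⟩
      · have := hp₀m.2; linarith
      · have := hp₀m.1; linarith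
    have hid := A.assoc (1/(1+r)) hp₀m q hqm x hx y hy 0 h0
    rw [hxyop, hR, hpq, ← hw] at hid
    -- hid : A.op q y 0 = A.op (1/2) x w
    have hhalf : (1/2 : ℝ) ∈ Set.Ioo (0:ℝ) 1 := by norm_num
    have hle : A.op (1/2) x w ≤ w := by
      have h1 := hMO x hx w hwm w hwm (1/2) hhalf hxr
      rwa [A.idem _ hhalf w hwm] at h1
    have hlt : w < A.op q y 0 :=
      hstrict (Set.mem_Icc_of_Ioo hrm) (Set.mem_Icc_of_Ioo hqm)
        (by rw [hq]; linarith [hrm.2])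
    rw [hid] at hlt
    linarith
  · rw [Set.InjOn] at hinj
    push_neg at hinj
    obtain ⟨a, ha, b, hb, heq, hne⟩ := hinj
    rcases hne.lt_or_gt with h | h
    · exact eats_of_flat A hMO hLC h0 hy h0y ha hb h heq
    · exact eats_of_flat A hMO hLC h0 hy h0y hb ha h heq.symm

end UCAaux


/-- Proposition 3.2(ii), first and second formulas: for a convex algebra on `[0,1]`
satisfying (MO) and (LC):
(1) `y ⊳ x` iff `x ≤ y` and `Γ_{x,y} : t ↦ y ⊕_t x` is not injective on `[0,1]`;
(2) for every `y ∈ (0,1]`, the following are equivalent: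
`∃ x ≠ y with y ⊳ x`; `y ⊳ 0`; `y ⊳ x` for every `x ≤ y`. -/
theorem stmt_8 (A : UCA) (hMO : A.MO) (hLC : A.LC) :
    (∀ x ∈ Set.Icc (0:ℝ) 1, ∀ y ∈ Set.Icc (0:ℝ) 1,
      (A.Eats y x ↔ x ≤ y ∧ ¬ Set.InjOn (fun t => A.op t y x) (Set.Icc (0:ℝ) 1))) ∧
    (∀ y ∈ Set.Ioc (0:ℝ) 1,
      ((∃ x ∈ Set.Icc (0:ℝ) 1, x ≠ y ∧ A.Eats y x) ↔ A.Eats y 0) ∧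
      (A.Eats y 0 ↔ ∀ x ∈ Set.Icc (0:ℝ) 1, x ≤ y → A.Eats y x)) := by
  constructor
  · intro x hx y hy
    constructor
    · intro he
      have hxy := UCAaux.eats_le A hLC hx hy he
      refine ⟨hxy, ?_⟩
      intro hinj
      have h1 : A.op (1/2) y x = A.op 1 y x := by
        rw [he (1/2) (by norm_num), he 1 (by norm_num)]
      have := hinj (show (1/2:ℝ) ∈ Set.Icc (0:ℝ) 1 by norm_num)
        (show (1:ℝ) ∈ Set.Icc (0:ℝ) 1 by norm_num) h1
      norm_num at this
    · rintro ⟨hxy, hninj⟩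
      rw [Set.InjOn] at hninj
      push_neg at hninj
      obtain ⟨a, ha, b, hb, heq, hne⟩ := hninj
      rcases hne.lt_or_gt with h | h
      · exact UCAaux.eats_of_flat A hMO hLC hx hy hxy ha hb h heq
      · exact UCAaux.eats_of_flat A hMO hLC hx hy hxy hb ha h heq.symm
  · intro y hy
    have hym : y ∈ Set.Icc (0:ℝ) 1 := ⟨hy.1.le, hy.2⟩
    have h0 : (0:ℝ) ∈ Set.Icc (0:ℝ) 1 := by norm_num
    constructor
    · constructor
      · rintro ⟨x, hx, hne, he⟩
        have hxy := UCAaux.eats_le A hLC hx hym he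
        exact UCAaux.eats_zero_of_eats A hMO hLC hx hym (lt_of_le_of_ne hxy hne) he
      · intro he
        exact ⟨0, h0, (ne_of_lt hy.1), he⟩
    · constructor
      · intro he0 x hx hxle t ht
        rcases eq_or_lt_of_le ht.2 with h1 | h1
        · rw [h1]; exact A.proj1 y hym x hx
        have hto : t ∈ Set.Ioo (0:ℝ) 1 := ⟨ht.1, h1⟩
        have hl := UCAaux.monoR A hMO hym h0 hx hto hx.1
        have hr := UCAaux.monoR A hMO hym hx hym hto hxle
        rw [he0 t ht] at hl
        rw [A.idem t hto y hym] at hr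
        linarith
      · intro h
        exact h 0 h0 hy.1.le
end

section
/- Let ⟨[0,1], ⊕_p⟩ be a convex algebra satisfying (MO) and (LC). Then for all x, y ∈ [0,1] with x ≤ y, the open interval (V_{x,y}, y) contains no element of E^⊕, i.e. (V_{x,y}, y) ∩ E^⊕ = ∅. -/
open Set Filter Topology

/-- Proposition 3.2(ii), third formula: for a convex algebra on `[0,1]` satisfying
(MO) and (LC), for all `x ≤ y` in `[0,1]`, `(V_{x,y}, y) ∩ E^⊕ = ∅`. -/
theorem stmt_9 (A : UCA) (hMO : A.MO) (hLC : A.LC) :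
    ∀ x ∈ Set.Icc (0:ℝ) 1, ∀ y ∈ Set.Icc (0:ℝ) 1, x ≤ y →
      Set.Ioo (A.V x y) y ∩ A.E = ∅ := by
  intro x hx y hy hxy
  ext e
  simp only [Set.mem_inter_iff, Set.mem_Ioo, Set.mem_empty_iff_false, iff_false, not_and]
  rintro ⟨hVe, hey⟩ ⟨heI, heE⟩
  -- show e ≤ V, contradiction with hVe
  have h0 : (0:ℝ) ∈ Set.Icc (0:ℝ) 1 := by constructor <;> norm_num
  have key : e ≤ A.V x y := by
    apply le_csInf ((Set.nonempty_Ioc.mpr one_pos).image _)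
    rintro b ⟨p, hp, rfl⟩
    show e ≤ A.op p y x
    rcases eq_or_lt_of_le hp.2 with h1 | h1
    · rw [h1, A.proj1 y hy x hx]; exact hey.le
    · have hpo : p ∈ Set.Ioo (0:ℝ) 1 := ⟨hp.1, h1⟩
      have hpo' : 1 - p ∈ Set.Ioo (0:ℝ) 1 := ⟨by linarith [hpo.2], by linarith [hpo.1]⟩
      have e1 : A.op p e 0 = e := heE p ⟨hp.1, hp.2⟩
      have e2 : A.op p e 0 = A.op (1 - p) 0 e := A.comm p hpo e heI 0 h0
      have e3 : A.op (1 - p) 0 e ≤ A.op (1 - p) x e :=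
        hMO 0 h0 x hx e heI (1 - p) hpo' hx.1
      have e4 : A.op p e x = A.op (1 - p) x e := A.comm p hpo e heI x hx
      have e5 : A.op p e x ≤ A.op p y x :=
        hMO e heI y hy x hx p hpo hey.le
      linarith
  linarith
end

section
/- Let ⟨[0,1], ⊕_p⟩ be a convex algebra satisfying (MO), (UC) and (LC). Then the set E^⊕ is a closed subset of [0,1], and for every y ∈ [0,1] the set E^⊕ ∩ [0,y] has a maximum, which equals V_{0,y}. -/
open Set Filter Topology

section Aux

variable (A : UCA)

omit A in
lemma aux_zero_mem0 : (0:ℝ) ∈ Set.Icc (0:ℝ) 1 := ⟨le_refl 0, zero_le_one⟩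
abbrev aux_zero_mem (_A : UCA) : (0:ℝ) ∈ Set.Icc (0:ℝ) 1 := aux_zero_mem0

lemma aux_mono2 (hMO : A.MO) {p x y y' : ℝ} (hp : p ∈ Set.Ioo (0:ℝ) 1)
    (hx : x ∈ Set.Icc (0:ℝ) 1) (hy : y ∈ Set.Icc (0:ℝ) 1) (hy' : y' ∈ Set.Icc (0:ℝ) 1)
    (h : y ≤ y') : A.op p x y ≤ A.op p x y' := by
  rw [A.comm p hp x hx y hy, A.comm p hp x hx y' hy']
  exact hMO y hy y' hy' x hx _ ⟨by linarith [hp.2], by linarith [hp.1]⟩ h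

lemma aux_mono_both (hMO : A.MO) {p a b c d : ℝ} (hp : p ∈ Set.Ioo (0:ℝ) 1)
    (ha : a ∈ Set.Icc (0:ℝ) 1) (hb : b ∈ Set.Icc (0:ℝ) 1) (hc : c ∈ Set.Icc (0:ℝ) 1)
    (hd : d ∈ Set.Icc (0:ℝ) 1) (hac : a ≤ c) (hbd : b ≤ d) :
    A.op p a b ≤ A.op p c d :=
  le_trans (hMO a ha c hc b hb p hp hac) (aux_mono2 A hMO hp hc hb hd hbd)

lemma aux_op_zero_le (hMO : A.MO) {p x : ℝ} (hp : p ∈ Set.Ioo (0:ℝ) 1)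
    (hx : x ∈ Set.Icc (0:ℝ) 1) : A.op p x 0 ≤ x := by
  have h := aux_mono2 A hMO hp hx (aux_zero_mem A) hx hx.1
  rwa [A.idem p hp x hx] at h

lemma aux_Fmem {p y : ℝ} (hp : p ∈ Set.Ioc (0:ℝ) 1) (hy : y ∈ Set.Icc (0:ℝ) 1) :
    A.op p y 0 ∈ Set.Icc (0:ℝ) 1 := by
  rcases eq_or_lt_of_le hp.2 with h1 | h1
  · rw [h1, A.proj1 y hy 0 (aux_zero_mem A)]; exact hy
  · exact A.mem p ⟨hp.1.le, hp.2⟩ y hy 0 (aux_zero_mem A)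

lemma aux_Fmul {p q y : ℝ} (hp : p ∈ Set.Ioc (0:ℝ) 1) (hq : q ∈ Set.Ioo (0:ℝ) 1)
    (hy : y ∈ Set.Icc (0:ℝ) 1) : A.op q (A.op p y 0) 0 = A.op (p * q) y 0 := by
  rcases eq_or_lt_of_le hp.2 with h1 | h1
  · rw [h1, A.proj1 y hy 0 (aux_zero_mem A), one_mul]
  · have hp' : p ∈ Set.Ioo (0:ℝ) 1 := ⟨hp.1, h1⟩
    have hpq : p * q < 1 := by nlinarith [hp.1, hq.1, hq.2]
    have hr : (1 - p) * q / (1 - p * q) ∈ Set.Ioo (0:ℝ) 1 := by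
      constructor
      · apply div_pos (mul_pos (by linarith [hp'.2]) hq.1) (by linarith)
      · rw [div_lt_one (by linarith)]; nlinarith [hq.2]
    rw [A.assoc p hp' q hq y hy 0 (aux_zero_mem A) 0 (aux_zero_mem A),
        A.idem _ hr 0 (aux_zero_mem A)]

lemma aux_bdd {y : ℝ} (hy : y ∈ Set.Icc (0:ℝ) 1) :
    BddBelow ((fun p => A.op p y 0) '' Set.Ioc (0:ℝ) 1) := by
  refine ⟨0, ?_⟩
  rintro _ ⟨p, hp, rfl⟩
  exact (aux_Fmem A hp hy).1

lemma aux_V_le {y : ℝ} (hy : y ∈ Set.Icc (0:ℝ) 1) {p : ℝ} (hp : p ∈ Set.Ioc (0:ℝ) 1) :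
    A.V 0 y ≤ A.op p y 0 :=
  csInf_le (aux_bdd A hy) ⟨p, hp, rfl⟩

lemma aux_V_nonneg {y : ℝ} (hy : y ∈ Set.Icc (0:ℝ) 1) : 0 ≤ A.V 0 y := by
  show 0 ≤ sInf ((fun p => A.op p y 0) '' Set.Ioc (0:ℝ) 1)
  have hne : ((fun p => A.op p y 0) '' Set.Ioc (0:ℝ) 1).Nonempty :=
    ⟨A.op 1 y 0, Set.mem_image_of_mem _ ⟨one_pos, le_refl 1⟩⟩
  apply le_csInf hne
  rintro _ ⟨p, hp, rfl⟩
  exact (aux_Fmem A hp hy).1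

lemma aux_V_le_self {y : ℝ} (hy : y ∈ Set.Icc (0:ℝ) 1) : A.V 0 y ≤ y := by
  have h := aux_V_le A hy (p := 1) ⟨one_pos, le_refl 1⟩
  rwa [A.proj1 y hy 0 (aux_zero_mem A)] at h

/-- key lower-bound lemma using (UC). -/
lemma aux_lower (hUC : A.UC) {y q : ℝ} (hy0 : 0 ≤ y) (hy1 : y < 1)
    (hq : q ∈ Set.Ioo (0:ℝ) 1)
    (h : ∀ ε : ℝ, 0 < ε → ε < 1 - y → y ≤ A.op q (y + ε) ε) : y ≤ A.op q y 0 := by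
  have hmem : Set.Ioo (0:ℝ) (1 - y) ∈ 𝓝[>] (0:ℝ) :=
    Ioo_mem_nhdsGT_of_mem ⟨le_refl 0, by linarith⟩
  have hev : ∀ᶠ ε in 𝓝[>] (0:ℝ), y ≤ A.op q (y + ε) ε :=
    eventually_of_mem hmem (fun ε hε => h ε hε.1 hε.2)
  have hbd : Filter.IsBoundedUnder (· ≤ ·) (𝓝[>] (0:ℝ)) (fun ε => A.op q (y + ε) ε) := by
    refine ⟨1, eventually_map.2 (eventually_of_mem hmem (fun ε hε => ?_))⟩
    exact (A.mem q ⟨hq.1.le, hq.2.le⟩ (y + ε) ⟨by linarith [hε.1], by linarith [hε.2]⟩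
      ε ⟨hε.1.le, by linarith [hε.2]⟩).2
  calc y ≤ Filter.limsup (fun ε => A.op q (y + ε) (0 + ε)) (𝓝[>] (0:ℝ)) := by
        refine le_limsup_of_frequently_le ?_ ?_
        · exact (hev.mono (fun ε hε => by simpa using hε)).frequently
        · simpa using hbd
    _ ≤ A.op q y 0 := hUC y ⟨hy0, hy1⟩ 0 ⟨le_refl 0, one_pos⟩ q hq

lemma aux_V_mem_E (hMO : A.MO) (hUC : A.UC) {y : ℝ} (hy : y ∈ Set.Icc (0:ℝ) 1) :
    A.V 0 y ∈ A.E := by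
  set V := A.V 0 y with hV
  have hV0 : 0 ≤ V := aux_V_nonneg A hy
  have hVy : V ≤ y := aux_V_le_self A hy
  have hVmem : V ∈ Set.Icc (0:ℝ) 1 := ⟨hV0, hVy.trans hy.2⟩
  refine ⟨hVmem, fun t ht => ?_⟩
  rcases eq_or_lt_of_le ht.2 with h1 | h1
  · rw [h1]; exact A.proj1 V hVmem 0 (aux_zero_mem A)
  have ht' : t ∈ Set.Ioo (0:ℝ) 1 := ⟨ht.1, h1⟩
  refine le_antisymm (aux_op_zero_le A hMO ht' hVmem) ?_
  rcases eq_or_lt_of_le hVmem.2 with hV1 | hV1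
  · -- V = 1, hence y = V and we are done
    have hyV : y = V := le_antisymm (hV1 ▸ hy.2) hVy
    have h2 : V ≤ A.op t y 0 := aux_V_le A hy (p := t) ⟨ht.1, ht.2⟩
    rwa [hyV] at h2
  · apply aux_lower A hUC hV0 hV1 ht'
    intro ε hε0 hε1
    have hVε : V + ε ∈ Set.Icc (0:ℝ) 1 := ⟨by linarith, by linarith⟩
    -- pick p with op p y 0 < V + ε
    have hne : ((fun p => A.op p y 0) '' Set.Ioc (0:ℝ) 1).Nonempty :=
      ⟨A.op 1 y 0, Set.mem_image_of_mem _ ⟨one_pos, le_refl 1⟩⟩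
    have hlt : sInf ((fun p => A.op p y 0) '' Set.Ioc (0:ℝ) 1) < V + ε := by
      have : A.V 0 y = sInf ((fun p => A.op p y 0) '' Set.Ioc (0:ℝ) 1) := rfl
      linarith [this ▸ (by linarith : A.V 0 y < V + ε)]
    obtain ⟨_, ⟨p, hp, rfl⟩, hplt⟩ := (csInf_lt_iff (aux_bdd A hy) hne).1 hlt
    have hpq : p * t ∈ Set.Ioc (0:ℝ) 1 :=
      ⟨mul_pos hp.1 ht.1, le_trans (by nlinarith [hp.1, ht.2, hp.2]) (le_refl 1)⟩
    calc V ≤ A.op (p * t) y 0 := aux_V_le A hy hpq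
      _ = A.op t (A.op p y 0) 0 := (aux_Fmul A hp ht' hy).symm
      _ ≤ A.op t (V + ε) ε :=
          aux_mono_both A hMO ht' (aux_Fmem A hp hy) (aux_zero_mem A) hVε
            ⟨hε0.le, by linarith⟩ hplt.le hε0.le

end Aux

/-- Proposition 3.2(iii): for a convex algebra on `[0,1]` satisfying (MO), (UC), (LC),
the set `E^⊕` is closed, and for every `y ∈ [0,1]` the set `E^⊕ ∩ [0,y]` has a maximum,
namely `V_{0,y}`. -/

theorem stmt_10 (A : UCA) (hMO : A.MO) (hUC : A.UC) (hLC : A.LC) :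
    IsClosed A.E ∧
    ∀ y ∈ Set.Icc (0:ℝ) 1, IsGreatest (A.E ∩ Set.Icc (0:ℝ) y) (A.V 0 y) := by
  constructor
  · -- closedness
    rw [← isOpen_compl_iff, isOpen_compl_iff, ← closure_subset_iff_isClosed]
    intro y hycl
    have hEsub : A.E ⊆ Set.Icc (0:ℝ) 1 := fun z hz => hz.1
    have hy : y ∈ Set.Icc (0:ℝ) 1 :=
      closure_minimal hEsub isClosed_Icc hycl
    refine ⟨hy, fun t ht => ?_⟩
    rcases eq_or_lt_of_le ht.2 with h1 | h1
    · rw [h1]; exact A.proj1 y hy 0 (aux_zero_mem A)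
    have ht' : t ∈ Set.Ioo (0:ℝ) 1 := ⟨ht.1, h1⟩
    refine le_antisymm (aux_op_zero_le A hMO ht' hy) ?_
    have hsplit : A.E = (A.E ∩ Set.Iic y) ∪ (A.E ∩ Set.Ioi y) := by
      rw [← Set.inter_union_distrib_left, Set.Iic_union_Ioi, Set.inter_univ]
    rw [hsplit, closure_union] at hycl
    rcases hycl with hA | hB
    · -- approached from below
      have hsub : A.E ∩ Set.Iic y ⊆ Set.Iic (A.op t y 0) := by
        rintro z ⟨hz, hzy⟩
        have : A.op t z 0 ≤ A.op t y 0 := hMO z hz.1 y hy 0 (aux_zero_mem A) t ht' hzy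
        rwa [hz.2 t ⟨ht.1, ht.2⟩] at this
      exact closure_minimal hsub isClosed_Iic hA
    · -- approached from above; then y < 1 and we use (UC)
      have hy1 : y < 1 := by
        rcases eq_or_lt_of_le hy.2 with h | h
        · exfalso
          have : A.E ∩ Set.Ioi y = ∅ := by
            apply Set.eq_empty_of_forall_notMem
            rintro z ⟨hz, hzy⟩
            exact absurd (h ▸ hzy) (not_lt.2 hz.1.2)
          rw [this, closure_empty] at hB
          exact hB
        · exact h
      apply aux_lower A hUC hy.1 hy1 ht'
      intro ε hε0 hε1
      obtain ⟨z, hz, hdist⟩ := Metric.mem_closure_iff.1 hB ε hε0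
      have hzy : y < z := hz.2
      have hzlt : z < y + ε := by
        have := abs_lt.1 (by rwa [Real.dist_eq] at hdist)
        linarith [this.1]
      have h1 : A.op t z 0 ≤ A.op t (y + ε) ε :=
        aux_mono_both A hMO ht' hz.1.1 (aux_zero_mem A)
          ⟨by linarith [hy.1], by linarith⟩ ⟨hε0.le, by linarith [hy.1]⟩
          hzlt.le hε0.le
      rw [hz.1.2 t ⟨ht.1, ht.2⟩] at h1
      linarith
  · -- IsGreatest
    intro y hy
    constructor
    · exact ⟨aux_V_mem_E A hMO hUC hy, aux_V_nonneg A hy, aux_V_le_self A hy⟩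
    · rintro z ⟨hzE, hz0, hzy⟩
      show z ≤ sInf ((fun p => A.op p y 0) '' Set.Ioc (0:ℝ) 1)
      have hne : ((fun p => A.op p y 0) '' Set.Ioc (0:ℝ) 1).Nonempty :=
        ⟨A.op 1 y 0, Set.mem_image_of_mem _ ⟨one_pos, le_refl 1⟩⟩
      apply le_csInf hne
      rintro _ ⟨p, hp, rfl⟩
      show z ≤ A.op p y 0
      rcases eq_or_lt_of_le hp.2 with h1 | h1
      · rw [h1, A.proj1 y hy 0 (aux_zero_mem A)]; exact hzy
      · have hp' : p ∈ Set.Ioo (0:ℝ) 1 := ⟨hp.1, h1⟩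
        have := hMO z hzE.1 y hy 0 (aux_zero_mem A) p hp' hzy
        rwa [hzE.2 p hp] at this
end

section
/- Let ⟨[0,1], ⊕_p⟩ be a convex algebra satisfying (MO) and (UC). Then for all x, y ∈ [0,1] with x ≤ y, all z ∈ [x, V_{x,y}], and all p ∈ (0,1): y ⊕_p z = y ⊕_p V_{x,y}. -/
open Set Filter Topology

/-! Write `f q = y ⊕_q x`. By (MO), `f` is monotone on `[0,1]` with `f 0 = x`, so `V = inf f`.
Since `y ⊕_p f r = f (p + r (1 - p))`, the value `y ⊕_p V` lies below `f (p + η)` for every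
`η > 0`, and it remains to compare the right limit of `f` at `p` with `f p`. Choose `d` such that
`f` is continuous at `p - d` and at `p + d` (a monotone function has only countably many
discontinuities) and write `f (p + η) = f (p - d + η) ⊕_{1/2} f (p + d + η)`. Letting `η → 0`
bounds `y ⊕_p V` by `(f (p - d) + ε) ⊕_{1/2} (f (p + d) + ε)` for every `ε > 0`, and (UC) turns
this into `y ⊕_p V ≤ f (p - d) ⊕_{1/2} f (p + d) = f p`. (UC) needs `f (p + d) < 1`; if instead
`f = 1` on `(p, 1)`, then `f p = 1` directly. -/

theorem Monotone.exists_continuousAt_sub_add {F : ℝ → ℝ} (hF : Monotone F) (p : ℝ) {δ : ℝ}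
    (hδ : 0 < δ) : ∃ d ∈ Ioo 0 δ, ContinuousAt F (p - d) ∧ ContinuousAt F (p + d) := by
  set S := {t | ¬ContinuousAt F t}
  have hS : S.Countable := hF.countable_not_continuousAt
  have hT : ((p - ·) ⁻¹' S ∪ (p + ·) ⁻¹' S).Countable :=
    (hS.preimage (sub_right_injective (b := p))).union (hS.preimage (add_right_injective p))
  obtain ⟨d, hd, hdT⟩ :=
    (hT.dense_compl ℝ).inter_open_nonempty (Ioo 0 δ) isOpen_Ioo (nonempty_Ioo.2 hδ)
  simp only [mem_compl_iff, mem_union, mem_preimage, S, mem_ofPred_eq, not_or, not_not] at hdT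
  exact ⟨d, hd, hdT⟩

theorem ContinuousAt.eventually_nhdsGT_lt_add {F : ℝ → ℝ} {t ε : ℝ} (ht : ContinuousAt F t)
    (hε : 0 < ε) : ∀ᶠ η in 𝓝[>] (0:ℝ), F (t + η) < F t + ε := by
  have hη : Tendsto (t + ·) (𝓝[>] (0:ℝ)) (𝓝 t) :=
    tendsto_nhdsWithin_of_tendsto_nhds (by simpa using (continuous_const_add t).tendsto 0)
  exact (ht.tendsto.comp hη).eventually (gt_mem_nhds (by linarith))

namespace UCA

variable (A : UCA) {x y : ℝ}

theorem op_op_right_self (hx : x ∈ Icc (0:ℝ) 1) (hy : y ∈ Icc (0:ℝ) 1) {s a : ℝ}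
    (hs : s ∈ Ioc (0:ℝ) 1) (ha : a ∈ Ioo (0:ℝ) 1) :
    A.op a (A.op s y x) x = A.op (s * a) y x := by
  rcases hs.2.lt_or_eq with hs1 | rfl
  · have hd : 0 < 1 - s * a := by nlinarith [hs.1, ha.1, ha.2]
    have hcoef : (1 - s) * a / (1 - s * a) ∈ Ioo (0:ℝ) 1 :=
      ⟨div_pos (by nlinarith [ha.1]) hd, (div_lt_one hd).2 (by nlinarith [ha.2])⟩
    rw [A.assoc s ⟨hs.1, hs1⟩ a ha y hy x hx x hx, A.idem _ hcoef x hx]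
  · rw [A.proj1 y hy x hx, one_mul]

theorem op_self_op (hx : x ∈ Icc (0:ℝ) 1) (hy : y ∈ Icc (0:ℝ) 1) {b s : ℝ}
    (hb : b ∈ Ioo (0:ℝ) 1) (hs : s ∈ Ioo (0:ℝ) 1) :
    A.op b y (A.op s y x) = A.op (b + s * (1 - b)) y x := by
  have hq : b + s * (1 - b) ∈ Ioo (0:ℝ) 1 :=
    ⟨by nlinarith [hb.1, hs.1, hb.2], by nlinarith [hb.2, hs.2, hs.1]⟩
  have hr : b / (b + s * (1 - b)) ∈ Ioo (0:ℝ) 1 :=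
    ⟨div_pos hb.1 hq.1, (div_lt_one hq.1).2 (by nlinarith [hs.1, hb.2])⟩
  have h := A.assoc _ hr _ hq y hy y hy x hx
  have e₁ : b / (b + s * (1 - b)) * (b + s * (1 - b)) = b := div_mul_cancel₀ _ hq.1.ne'
  have e₂ : (1 - b / (b + s * (1 - b))) * (b + s * (1 - b)) / (1 - b) = s := by
    have : (1:ℝ) - b ≠ 0 := by linarith [hb.2]
    have := hq.1.ne'
    field_simp
    ring
  rw [A.idem _ hr y hy, e₁, e₂] at h
  exact h.symm

theorem op_half_op_op (hx : x ∈ Icc (0:ℝ) 1) (hy : y ∈ Icc (0:ℝ) 1) {r q : ℝ}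
    (hr : r ∈ Ioo (0:ℝ) 1) (hq : q ∈ Ioo (0:ℝ) 1) :
    A.op (1 / 2) (A.op r y x) (A.op q y x) = A.op ((r + q) / 2) y x := by
  have hw : A.op q y x ∈ Icc (0:ℝ) 1 := A.mem q ⟨hq.1.le, hq.2.le⟩ y hy x hx
  set u := (1 - r) * (1 / 2) / (1 - r * (1 / 2)) with hu_def
  have hd : (0:ℝ) < 1 - r * (1 / 2) := by linarith [hr.2]
  have hu : u ∈ Ioo (0:ℝ) 1 :=
    ⟨div_pos (by nlinarith [hr.2]) hd, (div_lt_one hd).2 (by nlinarith [hr.1])⟩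
  have hu' : 1 - u ∈ Ioo (0:ℝ) 1 := ⟨by linarith [hu.2], by linarith [hu.1]⟩
  have hrh : r * (1 / 2) ∈ Ioo (0:ℝ) 1 := ⟨by linarith [hr.1], by linarith [hr.2]⟩
  have hqu : q * (1 - u) ∈ Ioo (0:ℝ) 1 :=
    ⟨mul_pos hq.1 hu'.1, by nlinarith [hq.2, hu'.2, hq.1, hu'.1]⟩
  have hcoef : r * (1 / 2) + q * (1 - u) * (1 - r * (1 / 2)) = (r + q) / 2 := by
    have : (2:ℝ) - r ≠ 0 := by linarith [hr.2]
    rw [hu_def]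
    field_simp
    ring
  rw [A.assoc r hr (1 / 2) (by norm_num) y hy x hx _ hw, A.comm _ hu x hx _ hw,
    A.op_op_right_self hx hy ⟨hq.1, hq.2.le⟩ hu', A.op_self_op hx hy hrh hqu, hcoef]

-- Clamping the coefficient to `[0,1]` makes this a monotone function on all of `ℝ`.
noncomputable def path (y x : ℝ) (t : ℝ) : ℝ :=
  A.op (projIcc 0 1 zero_le_one t) y x

theorem path_of_mem {t : ℝ} (ht : t ∈ Icc (0:ℝ) 1) : A.path y x t = A.op t y x := by
  rw [path, projIcc_of_mem _ ht]

end UCA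

namespace UCA.MO

variable {A : UCA} (hMO : A.MO) {x y : ℝ}
include hMO

theorem op_le_op_right {p a b b' : ℝ} (hp : p ∈ Ioo (0:ℝ) 1) (ha : a ∈ Icc (0:ℝ) 1)
    (hb : b ∈ Icc (0:ℝ) 1) (hb' : b' ∈ Icc (0:ℝ) 1) (h : b ≤ b') :
    A.op p a b ≤ A.op p a b' := by
  rw [A.comm p hp a ha b hb, A.comm p hp a ha b' hb']
  exact hMO b hb b' hb' a ha (1 - p) ⟨by linarith [hp.2], by linarith [hp.1]⟩ h

theorem le_op_s11 (hx : x ∈ Icc (0:ℝ) 1) (hy : y ∈ Icc (0:ℝ) 1) (hxy : x ≤ y) {q : ℝ}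
    (hq : q ∈ Icc (0:ℝ) 1) : x ≤ A.op q y x := by
  rcases hq.1.eq_or_lt with rfl | hq0
  · rw [A.proj0 y hy x hx]
  rcases hq.2.lt_or_eq with hq1 | rfl
  · calc x = A.op q x x := (A.idem q ⟨hq0, hq1⟩ x hx).symm
      _ ≤ A.op q y x := hMO x hx y hy x hx q ⟨hq0, hq1⟩ hxy
  · rwa [A.proj1 y hy x hx]

theorem op_le_s11 (hx : x ∈ Icc (0:ℝ) 1) (hy : y ∈ Icc (0:ℝ) 1) (hxy : x ≤ y) {q : ℝ}
    (hq : q ∈ Icc (0:ℝ) 1) : A.op q y x ≤ y := by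
  rcases hq.1.eq_or_lt with rfl | hq0
  · rwa [A.proj0 y hy x hx]
  rcases hq.2.lt_or_eq with hq1 | rfl
  · calc A.op q y x ≤ A.op q y y := hMO.op_le_op_right ⟨hq0, hq1⟩ hy hx hy hxy
      _ = y := A.idem q ⟨hq0, hq1⟩ y hy
  · rw [A.proj1 y hy x hx]

theorem op_le_op_of_le (hx : x ∈ Icc (0:ℝ) 1) (hy : y ∈ Icc (0:ℝ) 1) (hxy : x ≤ y) {s q : ℝ}
    (hs : s ∈ Icc (0:ℝ) 1) (hq : q ∈ Icc (0:ℝ) 1) (hsq : s ≤ q) :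
    A.op s y x ≤ A.op q y x := by
  rcases hs.1.eq_or_lt with rfl | hs0
  · rw [A.proj0 y hy x hx]
    exact hMO.le_op_s11 hx hy hxy hq
  rcases hsq.eq_or_lt with rfl | hsq
  · rfl
  have hq0 : 0 < q := hs0.trans hsq
  have ha : s / q ∈ Ioo (0:ℝ) 1 := ⟨div_pos hs0 hq0, (div_lt_one hq0).2 hsq⟩
  have hfq : A.op q y x ∈ Icc (0:ℝ) 1 := A.mem q hq y hy x hx
  have h := A.op_op_right_self hx hy ⟨hq0, hq.2⟩ ha
  rw [mul_div_cancel₀ s hq0.ne'] at h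
  calc A.op s y x = A.op (s / q) (A.op q y x) x := h.symm
    _ ≤ A.op (s / q) (A.op q y x) (A.op q y x) :=
        hMO.op_le_op_right ha hfq hx hfq (hMO.le_op_s11 hx hy hxy hq)
    _ = A.op q y x := A.idem _ ha _ hfq

theorem monotone_path (hx : x ∈ Icc (0:ℝ) 1) (hy : y ∈ Icc (0:ℝ) 1) (hxy : x ≤ y) :
    Monotone (A.path y x) := fun _ _ hst =>
  hMO.op_le_op_of_le hx hy hxy (Subtype.mem _) (Subtype.mem _) (monotone_projIcc _ hst)

theorem le_V (hx : x ∈ Icc (0:ℝ) 1) (hy : y ∈ Icc (0:ℝ) 1) (hxy : x ≤ y) : x ≤ A.V x y :=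
  le_csInf ⟨_, 1, ⟨one_pos, le_rfl⟩, rfl⟩ <| by
    rintro _ ⟨s, hs, rfl⟩
    exact hMO.le_op_s11 hx hy hxy (Ioc_subset_Icc_self hs)

theorem V_le (hx : x ∈ Icc (0:ℝ) 1) (hy : y ∈ Icc (0:ℝ) 1) (hxy : x ≤ y) {s : ℝ}
    (hs : s ∈ Ioc (0:ℝ) 1) : A.V x y ≤ A.op s y x := by
  refine csInf_le ⟨x, ?_⟩ ⟨s, hs, rfl⟩
  rintro _ ⟨t, ht, rfl⟩
  exact hMO.le_op_s11 hx hy hxy (Ioc_subset_Icc_self ht)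

theorem V_mem (hx : x ∈ Icc (0:ℝ) 1) (hy : y ∈ Icc (0:ℝ) 1) (hxy : x ≤ y) :
    A.V x y ∈ Icc (0:ℝ) 1 :=
  ⟨hx.1.trans (hMO.le_V hx hy hxy),
    (hMO.V_le hx hy hxy ⟨one_pos, le_rfl⟩).trans ((A.proj1 y hy x hx).le.trans hy.2)⟩

theorem op_V_le_op_add (hx : x ∈ Icc (0:ℝ) 1) (hy : y ∈ Icc (0:ℝ) 1) (hxy : x ≤ y) {p η : ℝ}
    (hp : p ∈ Ioo (0:ℝ) 1) (hη : η ∈ Ioo 0 (1 - p)) :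
    A.op p y (A.V x y) ≤ A.op (p + η) y x := by
  have h1p : (0:ℝ) < 1 - p := by linarith [hp.2]
  have hr : η / (1 - p) ∈ Ioo (0:ℝ) 1 := ⟨div_pos hη.1 h1p, (div_lt_one h1p).2 hη.2⟩
  have h := hMO.op_le_op_right hp hy (hMO.V_mem hx hy hxy)
    (A.mem _ ⟨hr.1.le, hr.2.le⟩ y hy x hx) (hMO.V_le hx hy hxy ⟨hr.1, hr.2.le⟩)
  rwa [A.op_self_op hx hy hp hr, div_mul_cancel₀ η h1p.ne'] at h

theorem op_eq_one (hx : x ∈ Icc (0:ℝ) 1) (hy : y ∈ Icc (0:ℝ) 1) (hxy : x ≤ y) {p : ℝ}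
    (hp : p ∈ Ioo (0:ℝ) 1) (h : ∀ q ∈ Ioo p 1, 1 ≤ A.op q y x) : A.op p y x = 1 := by
  have hq : (p + 1) / 2 ∈ Ioo p 1 := ⟨by linarith [hp.2], by linarith [hp.2]⟩
  set q := (p + 1) / 2
  have hq0 : 0 < q := hp.1.trans hq.1
  have hfq : A.op q y x = 1 := le_antisymm (A.mem _ ⟨hq0.le, hq.2.le⟩ y hy x hx).2 (h q hq)
  have hy1 : y = 1 :=
    le_antisymm hy.2 ((h q hq).trans (hMO.op_le_s11 hx hy hxy ⟨hq0.le, hq.2.le⟩))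
  have ha : p / q ∈ Ioo p 1 :=
    ⟨(lt_div_iff₀ hq0).2 (by nlinarith [hp.1, hq.2]), (div_lt_one hq0).2 hq.1⟩
  -- `f p = f q ⊕_{p/q} x = y ⊕_{p/q} x = f (p/q)`, and `p/q ∈ (p, 1)`.
  have hp' := A.op_op_right_self hx hy ⟨hq0, hq.2.le⟩ ⟨hp.1.trans ha.1, ha.2⟩
  rw [mul_div_cancel₀ p hq0.ne', hfq, ← hy1] at hp'
  exact le_antisymm (A.mem p ⟨hp.1.le, hp.2.le⟩ y hy x hx).2 (hp' ▸ h _ ha)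

end UCA.MO

namespace UCA.UC

variable {A : UCA}

theorem le_op_of_eventually_le (hUC : A.UC) {a b q c : ℝ} (ha : a ∈ Ico (0:ℝ) 1)
    (hb : b ∈ Ico (0:ℝ) 1) (hq : q ∈ Ioo (0:ℝ) 1)
    (h : ∀ᶠ ε in 𝓝[>] (0:ℝ), c ≤ A.op q (a + ε) (b + ε)) : c ≤ A.op q a b := by
  have hbdd : IsBoundedUnder (· ≤ ·) (𝓝[>] (0:ℝ)) (fun ε => A.op q (a + ε) (b + ε)) := by
    refine isBoundedUnder_of_eventually_le (a := 1) ?_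
    filter_upwards [Ioo_mem_nhdsGT (sub_pos.2 (max_lt ha.2 hb.2))] with ε hε
    have := le_max_left a b
    have := le_max_right a b
    exact (A.mem q ⟨hq.1.le, hq.2.le⟩ _ ⟨by linarith [ha.1, hε.1], by linarith [hε.2]⟩ _
      ⟨by linarith [hb.1, hε.1], by linarith [hε.2]⟩).2
  exact (le_limsup_of_frequently_le h.frequently hbdd).trans (hUC a ha b hb q hq)

end UCA.UC

namespace UCA

variable {A : UCA} {x y : ℝ}

theorem op_V_le_op_half_add (hMO : A.MO) (hx : x ∈ Icc (0:ℝ) 1) (hy : y ∈ Icc (0:ℝ) 1)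
    (hxy : x ≤ y) {p d ε : ℝ} (hd : d ∈ Ioo 0 p) (hpd : p + d < 1) (hε : 0 < ε)
    (hb1 : A.op (p + d) y x + ε ≤ 1) (h₁ : ContinuousAt (A.path y x) (p - d))
    (h₂ : ContinuousAt (A.path y x) (p + d)) :
    A.op p y (A.V x y) ≤ A.op (1 / 2) (A.op (p - d) y x + ε) (A.op (p + d) y x + ε) := by
  have hr : p - d ∈ Ioo (0:ℝ) 1 := ⟨by linarith [hd.2], by linarith [hd.1]⟩
  have hq : p + d ∈ Ioo (0:ℝ) 1 := ⟨by linarith [hd.1, hd.2], hpd⟩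
  obtain ⟨η, hηr, hηq, hη⟩ := ((h₁.eventually_nhdsGT_lt_add hε).and
    ((h₂.eventually_nhdsGT_lt_add hε).and (Ioo_mem_nhdsGT (sub_pos.2 hpd)))).exists
  have hr' : p - d + η ∈ Ioo (0:ℝ) 1 := ⟨by linarith [hr.1, hη.1], by linarith [hη.2, hd.1]⟩
  have hq' : p + d + η ∈ Ioo (0:ℝ) 1 := ⟨by linarith [hq.1, hη.1], by linarith [hη.2]⟩
  rw [A.path_of_mem ⟨hr'.1.le, hr'.2.le⟩, A.path_of_mem ⟨hr.1.le, hr.2.le⟩] at hηr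
  rw [A.path_of_mem ⟨hq'.1.le, hq'.2.le⟩, A.path_of_mem ⟨hq.1.le, hq.2.le⟩] at hηq
  have hfr' := A.mem _ ⟨hr'.1.le, hr'.2.le⟩ y hy x hx
  have hfq' := A.mem _ ⟨hq'.1.le, hq'.2.le⟩ y hy x hx
  have hab : A.op (p - d) y x ≤ A.op (p + d) y x :=
    hMO.op_le_op_of_le hx hy hxy ⟨hr.1.le, hr.2.le⟩ ⟨hq.1.le, hq.2.le⟩ (by linarith [hd.1])
  have haε : A.op (p - d) y x + ε ∈ Icc (0:ℝ) 1 :=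
    ⟨by linarith [(A.mem _ ⟨hr.1.le, hr.2.le⟩ y hy x hx).1], by linarith⟩
  have hbε : A.op (p + d) y x + ε ∈ Icc (0:ℝ) 1 :=
    ⟨by linarith [(A.mem _ ⟨hq.1.le, hq.2.le⟩ y hy x hx).1], hb1⟩
  calc A.op p y (A.V x y) ≤ A.op (p + η) y x :=
        hMO.op_V_le_op_add hx hy hxy ⟨by linarith [hd.1, hd.2], by linarith [hd.1]⟩
          ⟨hη.1, by linarith [hη.2, hd.1]⟩
    _ = A.op (1 / 2) (A.op (p - d + η) y x) (A.op (p + d + η) y x) := by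
        rw [A.op_half_op_op hx hy hr' hq']
        ring_nf
    _ ≤ A.op (1 / 2) (A.op (p - d) y x + ε) (A.op (p + d + η) y x) :=
        hMO _ hfr' _ haε _ hfq' _ (by norm_num) hηr.le
    _ ≤ A.op (1 / 2) (A.op (p - d) y x + ε) (A.op (p + d) y x + ε) :=
        hMO.op_le_op_right (by norm_num) haε hfq' hbε hηq.le

theorem op_V_le_op_of_continuousAt (hMO : A.MO) (hUC : A.UC) (hx : x ∈ Icc (0:ℝ) 1)
    (hy : y ∈ Icc (0:ℝ) 1) (hxy : x ≤ y) {p d : ℝ} (hd : d ∈ Ioo 0 p) (hpd : p + d < 1)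
    (hlt : A.op (p + d) y x < 1) (h₁ : ContinuousAt (A.path y x) (p - d))
    (h₂ : ContinuousAt (A.path y x) (p + d)) :
    A.op p y (A.V x y) ≤ A.op p y x := by
  have hr : p - d ∈ Ioo (0:ℝ) 1 := ⟨by linarith [hd.2], by linarith [hd.1]⟩
  have hq : p + d ∈ Ioo (0:ℝ) 1 := ⟨by linarith [hd.1, hd.2], hpd⟩
  have hab : A.op (p - d) y x ≤ A.op (p + d) y x :=
    hMO.op_le_op_of_le hx hy hxy ⟨hr.1.le, hr.2.le⟩ ⟨hq.1.le, hq.2.le⟩ (by linarith [hd.1])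
  have ha0 := (A.mem _ ⟨hr.1.le, hr.2.le⟩ y hy x hx).1
  have hp : p = ((p - d) + (p + d)) / 2 := by ring
  rw [hp, ← A.op_half_op_op hx hy hr hq, ← hp]
  refine hUC.le_op_of_eventually_le ⟨ha0, hab.trans_lt hlt⟩ ⟨ha0.trans hab, hlt⟩
    (by norm_num) ?_
  filter_upwards [Ioo_mem_nhdsGT (sub_pos.2 hlt)] with ε hε
  exact op_V_le_op_half_add hMO hx hy hxy hd hpd hε.1 (by linarith [hε.2]) h₁ h₂

theorem op_V_le_op (hMO : A.MO) (hUC : A.UC) (hx : x ∈ Icc (0:ℝ) 1) (hy : y ∈ Icc (0:ℝ) 1)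
    (hxy : x ≤ y) {p : ℝ} (hp : p ∈ Ioo (0:ℝ) 1) :
    A.op p y (A.V x y) ≤ A.op p y x := by
  by_cases h : ∃ q ∈ Ioo p 1, A.op q y x < 1
  · obtain ⟨q, hq, hfq⟩ := h
    obtain ⟨d, hd, h₁, h₂⟩ := (hMO.monotone_path hx hy hxy).exists_continuousAt_sub_add p
      (lt_min hp.1 (sub_pos.2 hq.1))
    have hdq : p + d < q := by linarith [hd.2.trans_le (min_le_right _ _)]
    refine op_V_le_op_of_continuousAt hMO hUC hx hy hxy ⟨hd.1, hd.2.trans_le (min_le_left _ _)⟩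
      (hdq.trans hq.2) ?_ h₁ h₂
    exact (hMO.op_le_op_of_le hx hy hxy ⟨by linarith [hp.1, hd.1], by linarith [hq.2]⟩
      ⟨by linarith [hp.1, hq.1], hq.2.le⟩ hdq.le).trans_lt hfq
  · simp only [not_exists, not_and, not_lt] at h
    rw [hMO.op_eq_one hx hy hxy hp h]
    exact (A.mem p ⟨hp.1.le, hp.2.le⟩ y hy _ (hMO.V_mem hx hy hxy)).2

end UCA

/-- Proposition 3.3(i): for a convex algebra on `[0,1]` satisfying (MO) and (UC),
for all `x ≤ y` in `[0,1]`, all `z ∈ [x, V_{x,y}]` and all `p ∈ (0,1)`,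
`y ⊕_p z = y ⊕_p V_{x,y}`. -/
theorem stmt_11 (A : UCA) (hMO : A.MO) (hUC : A.UC) :
    ∀ x ∈ Set.Icc (0:ℝ) 1, ∀ y ∈ Set.Icc (0:ℝ) 1, x ≤ y →
      ∀ z ∈ Set.Icc x (A.V x y), ∀ p ∈ Set.Ioo (0:ℝ) 1,
        A.op p y z = A.op p y (A.V x y) := by
  intro x hx y hy hxy z hz p hp
  have hV := hMO.V_mem hx hy hxy
  have hzI : z ∈ Icc (0:ℝ) 1 := ⟨hx.1.trans hz.1, hz.2.trans hV.2⟩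
  refine le_antisymm (hMO.op_le_op_right hp hy hzI hV hz.2) ?_
  calc A.op p y (A.V x y) ≤ A.op p y x := UCA.op_V_le_op hMO hUC hx hy hxy hp
    _ ≤ A.op p y z := hMO.op_le_op_right hp hy hx hzI hz.1
end
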